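/- arXiv:1909.10228 — 4 statements merged into one kernel-verified Lean document; each statement's English description precedes it below -/
import Mathlib

section
/- Let M ⊂ ℝ^D be a closed set with reach(M) = τ > 0. Then for any two distinct points x, y ∈ M, the distance from y to the tangent space T_x M (as an affine subspace through x) satisfies d(y, T_x M) ≤ ‖x − y‖₂² / (2τ). -/
/-!
Federer's argument. If `M` has reach at least `τ`, every `z` with `infDist z M < τ` has a
unique footpoint `ξ z = nearestPt M z`, and `ξ` is continuous there. Moving `z` by small steps
in the direction `z - ξ z` (an Euler polygon for the gradient flow of `infDist · M`, along which
footpoints move little by uniform continuity) increases the distance to `M` at almost unit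
speed; hence the normal segment from `ξ z` through `z` stays distance-minimizing up to any
length `R < τ`. The ball of radius `R` around its endpoint misses `M`, which gives
`⟪z - ξ z, y - ξ z⟫ ≤ infDist z M * ‖y - ξ z‖² / (2R)` for `y ∈ M`.
If `v` is orthogonal to the tangent cone at `x`, then `ξ (x + t v) - x = o(t)`, and letting
`t → 0` with `R = τ - t` yields `⟪v, y - x⟫ ≤ ‖v‖ ‖y - x‖² / (2τ)`. The theorem is the case
where `v` is the component of `y - x` orthogonal to `T`.
-/

open Metric Set Filter Topology Asymptotics
open scoped RealInnerProductSpace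

section NearestPoint

variable {X : Type*} [MetricSpace X] {M : Set X} {τ : ℝ} {z : X}

def ReachAtLeast (M : Set X) (τ : ℝ) : Prop :=
  ∀ z, infDist z M < τ → ∃! y, y ∈ M ∧ dist z y = infDist z M

-- An arbitrary point when `z` has no nearest point in `M`.
noncomputable def nearestPt (M : Set X) (z : X) : X :=
  haveI : Nonempty X := ⟨z⟩
  Classical.epsilon fun y => y ∈ M ∧ dist z y = infDist z M

namespace ReachAtLeast

theorem nearestPt_spec (hr : ReachAtLeast M τ) (hz : infDist z M < τ) :
    nearestPt M z ∈ M ∧ dist z (nearestPt M z) = infDist z M :=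
  Classical.epsilon_spec (hr z hz).exists

theorem eq_nearestPt (hr : ReachAtLeast M τ) (hz : infDist z M < τ) {y : X} (hy : y ∈ M)
    (hzy : dist z y = infDist z M) : y = nearestPt M z :=
  (hr z hz).unique ⟨hy, hzy⟩ (hr.nearestPt_spec hz)

theorem isClosed (hr : ReachAtLeast M τ) (hτ : 0 < τ) : IsClosed M := by
  refine isClosed_of_closure_subset fun z hz => ?_
  have hz0 : infDist z M = 0 := (mem_closure_iff_infDist_zero (closure_nonempty_iff.1 ⟨z, hz⟩)).1 hz
  obtain ⟨y, ⟨hy, hzy⟩, -⟩ := hr z (hz0.trans_lt hτ)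
  rwa [dist_eq_zero.1 (hzy.trans hz0)]

theorem continuousOn_nearestPt [ProperSpace X] (hr : ReachAtLeast M τ) :
    ContinuousOn (nearestPt M) {z | infDist z M < τ} := by
  have hU : IsOpen {z | infDist z M < τ} := isOpen_lt (continuous_infDist_pt M) continuous_const
  intro z₀ hz₀
  rw [ContinuousWithinAt, hU.nhdsWithin_eq hz₀]
  have hM := hr.isClosed (infDist_nonneg.trans_lt hz₀)
  have hnear : ∀ ε > 0, ∀ᶠ z in 𝓝 z₀,
      nearestPt M z ∈ M ∩ closedBall z₀ (infDist z₀ M + ε) := by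
    intro ε hε
    filter_upwards [hU.mem_nhds hz₀, ball_mem_nhds z₀ (half_pos hε)] with z hz hzz₀
    obtain ⟨hzM, hzd⟩ := hr.nearestPt_spec hz
    refine ⟨hzM, ?_⟩
    have := mem_ball.1 hzz₀
    calc dist (nearestPt M z) z₀ ≤ dist (nearestPt M z) z + dist z z₀ := dist_triangle _ _ _
      _ ≤ (infDist z₀ M + dist z z₀) + dist z z₀ := by
          rw [dist_comm, hzd]; gcongr; exact infDist_le_infDist_add_dist
      _ ≤ infDist z₀ M + ε := by linarith
  refine (isCompact_closedBall z₀ (infDist z₀ M + 1)).tendsto_nhds_of_unique_mapClusterPt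
    ((hnear 1 one_pos).mono fun _ h => h.2) fun q _ hq => ?_
  have hqε : ∀ ε > 0, q ∈ M ∩ closedBall z₀ (infDist z₀ M + ε) := fun ε hε =>
    (hM.inter isClosed_closedBall).mem_of_mapClusterPt hq (hnear ε hε)
  have hqM : q ∈ M := (hqε 1 one_pos).1
  refine hr.eq_nearestPt hz₀ hqM (le_antisymm ?_ (infDist_le_dist_of_mem hqM))
  refine le_of_forall_pos_le_add fun ε hε => ?_
  rw [dist_comm]
  exact (hqε ε hε).2

end ReachAtLeast

end NearestPoint

theorem dist_iterate_le_and_add_le {X : Type*} [PseudoMetricSpace X] {s : X → X} {φ : X → ℝ}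
    {z₀ : X} {h a : ℝ} {N : ℕ} (hh : 0 ≤ h) (ha : 0 ≤ a)
    (hs : ∀ z ∈ closedBall z₀ (N * h), dist (s z) z ≤ h)
    (hφ : ∀ z ∈ closedBall z₀ (N * h), s z ∈ closedBall z₀ (N * h) → φ z₀ ≤ φ z →
      φ z + a ≤ φ (s z)) :
    ∀ k ≤ N, dist (s^[k] z₀) z₀ ≤ k * h ∧ φ z₀ + k * a ≤ φ (s^[k] z₀) := by
  intro k
  induction k with
  | zero => simp
  | succ k ih =>
    intro hk
    obtain ⟨hdist, hφk⟩ := ih (Nat.le_of_succ_le hk)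
    have hkN : ((k + 1 : ℕ) : ℝ) * h ≤ N * h := by gcongr
    push_cast at hkN ⊢
    have hmem : s^[k] z₀ ∈ closedBall z₀ (N * h) := mem_closedBall.2 (by linarith)
    have hdist' : dist (s^[k + 1] z₀) z₀ ≤ (k + 1) * h := by
      rw [Function.iterate_succ_apply']
      linarith [dist_triangle (s (s^[k] z₀)) (s^[k] z₀) z₀, hs _ hmem]
    refine ⟨hdist', ?_⟩
    rw [Function.iterate_succ_apply'] at hdist' ⊢
    have := hφ _ hmem (mem_closedBall.2 (hdist'.trans hkN))
      ((le_add_of_nonneg_right (by positivity)).trans hφk)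
    linarith

section InnerProductGeometry

variable {E : Type*} [NormedAddCommGroup E] [InnerProductSpace ℝ E]

theorem two_mul_inner_le_norm_sq_of_norm_le_norm_sub {a u : E} (h : ‖a‖ ≤ ‖a - u‖) :
    2 * ⟪a, u⟫ ≤ ‖u‖ ^ 2 := by
  have := pow_le_pow_left₀ (norm_nonneg a) h 2
  rw [norm_sub_sq_real] at this
  linarith

theorem norm_sq_le_two_mul_inner_of_norm_sub_le_norm {a u : E} (h : ‖a - u‖ ≤ ‖a‖) :
    ‖u‖ ^ 2 ≤ 2 * ⟪a, u⟫ := by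
  have := pow_le_pow_left₀ (norm_nonneg _) h 2
  rw [norm_sub_sq_real] at this
  linarith

theorem sq_sub_le_dist_add_smul_sq {q q' ν : E} {d h ε : ℝ} (hν : ‖ν‖ = 1) (hd : 0 ≤ d)
    (hh : 0 ≤ h) (hdq' : d ≤ dist (q + d • ν) q') (hqq' : dist q q' ≤ ε) :
    (d + h) ^ 2 - 2 * h * ε ≤ dist (q + (d + h) • ν) q' ^ 2 := by
  set a := q + d • ν - q'
  have ha : q + (d + h) • ν - q' = a + h • ν := by simp only [a, add_smul]; abel
  have hνa : d - ε ≤ ⟪a, ν⟫ := by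
    have := neg_le_of_abs_le (abs_real_inner_le_norm (q - q') ν)
    rw [hν, mul_one, ← dist_eq_norm] at this
    rw [show a = (q - q') + d • ν by simp only [a]; abel, inner_add_left, real_inner_smul_left,
      real_inner_self_eq_norm_sq, hν]
    linarith
  have hda : d ^ 2 ≤ ‖a‖ ^ 2 := pow_le_pow_left₀ hd (by rwa [← dist_eq_norm]) 2
  rw [dist_eq_norm, ha, norm_add_sq_real, real_inner_smul_right, norm_smul, hν,
    Real.norm_of_nonneg hh]
  nlinarith

theorem dist_add_smul_sq_le {p w ν : E} {d L η : ℝ} (hν : ‖ν‖ = 1) (hd : 0 < d)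
    (hηL : η ≤ d + L) (hw₀ : dist w (p + d • ν) ≤ L) (hwp : d + L - η ≤ dist w p) :
    dist w (p + (d + L) • ν) ^ 2 ≤ 2 * L * (d + L) * η / d := by
  set u := w - (p + d • ν)
  have hL : 0 ≤ L := dist_nonneg.trans hw₀
  have hu : ‖u‖ ≤ L := by rwa [← dist_eq_norm]
  have hu2 : ‖u‖ ^ 2 ≤ L ^ 2 := pow_le_pow_left₀ (norm_nonneg u) hu 2
  have hfar : (d + L - η) ^ 2 ≤ ‖d • ν + u‖ ^ 2 := by
    refine pow_le_pow_left₀ (by linarith) ?_ 2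
    rwa [show d • ν + u = w - p by simp only [u]; abel, ← dist_eq_norm]
  rw [norm_add_sq_real, real_inner_smul_left, norm_smul, hν, Real.norm_of_nonneg hd.le,
    mul_one] at hfar
  rw [dist_eq_norm, show w - (p + (d + L) • ν) = u - L • ν by simp only [u, add_smul]; abel,
    norm_sub_sq_real, real_inner_smul_right, norm_smul, hν, Real.norm_of_nonneg hL, mul_one,
    le_div_iff₀ hd, real_inner_comm]
  nlinarith [mul_le_mul_of_nonneg_left hfar hL,
    mul_le_mul_of_nonneg_left hu2 (by linarith : 0 ≤ d + L), mul_nonneg hL (sq_nonneg η)]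

theorem infDist_add_smul_le {M : Set E} {x : E} (hx : x ∈ M) (v : E) {t : ℝ} (ht : 0 ≤ t) :
    infDist (x + t • v) M ≤ t * ‖v‖ := by
  simpa [dist_eq_norm, norm_smul, Real.norm_of_nonneg ht] using
    infDist_le_dist_of_mem (x := x + t • v) hx

theorem eventually_inner_sub_le_mul_norm_sub [ProperSpace E] {M : Set E} {x v : E} {c : ℝ}
    (hv : ∀ w ∈ tangentConeAt ℝ M x, ⟪v, w⟫ ≤ 0) (hc : 0 < c) :
    ∀ᶠ q in 𝓝[M] x, ⟪v, q - x⟫ ≤ c * ‖q - x‖ := by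
  by_contra hbad
  obtain ⟨q, hqx, hq⟩ := exists_seq_forall_of_frequently (not_eventually.1 hbad)
  simp only [not_le] at hq
  have hne : ∀ n, ‖q n - x‖ ≠ 0 := fun n h0 => by
    simpa [norm_eq_zero.1 h0] using hq n
  set u := fun n => ‖q n - x‖⁻¹ • (q n - x)
  have hu : ∀ n, u n ∈ sphere (0 : E) 1 := fun n => by
    simp [u, norm_smul, hne n]
  obtain ⟨w, -, φ, hφ, hw⟩ := (isCompact_sphere (0 : E) 1).tendsto_subseq hu
  have hqx' := (tendsto_nhdsWithin_iff.1 hqx)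
  have hwT : w ∈ tangentConeAt ℝ M x := by
    refine mem_tangentConeAt_of_seq atTop (fun n => ‖q (φ n) - x‖⁻¹) (fun n => q (φ n) - x)
      ?_ ?_ hw
    · simpa using (hqx'.1.comp hφ.tendsto_atTop).sub_const x
    · simpa using hφ.tendsto_atTop.eventually hqx'.2
  have hcw : c ≤ ⟪v, w⟫ := by
    refine ge_of_tendsto (tendsto_const_nhds.inner hw) (Eventually.of_forall fun n => ?_)
    have := hq (φ n)
    simp only [Function.comp, u, real_inner_smul_right]
    rw [le_inv_mul_iff₀ ((norm_nonneg _).lt_of_ne' (hne _)), mul_comm]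
    exact this.le
  linarith [hv w hwT]

end InnerProductGeometry

section Reach

variable {E : Type*} [NormedAddCommGroup E] [InnerProductSpace ℝ E] {M : Set E} {τ : ℝ} {z : E}

noncomputable def unitNormal (M : Set E) (z : E) : E :=
  (infDist z M)⁻¹ • (z - nearestPt M z)

-- An Euler step of length `h` for the gradient flow of `infDist · M`, whose gradient at `z`
-- is `unitNormal M z`.
noncomputable def normalStep (M : Set E) (h : ℝ) (z : E) : E :=
  z + h • unitNormal M z

theorem nearestPt_add_smul_unitNormal (hz₀ : infDist z M ≠ 0) :
    nearestPt M z + infDist z M • unitNormal M z = z := by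
  rw [unitNormal, smul_smul, mul_inv_cancel₀ hz₀, one_smul, add_sub_cancel]

namespace ReachAtLeast

theorem norm_unitNormal (hr : ReachAtLeast M τ) (hz : infDist z M < τ)
    (hz₀ : 0 < infDist z M) : ‖unitNormal M z‖ = 1 := by
  rw [unitNormal, norm_smul, norm_inv, ← dist_eq_norm, (hr.nearestPt_spec hz).2,
    Real.norm_of_nonneg hz₀.le, inv_mul_cancel₀ hz₀.ne']

theorem dist_normalStep_le (hr : ReachAtLeast M τ) (hz : infDist z M < τ) {h : ℝ} (hh : 0 ≤ h) :
    dist (normalStep M h z) z ≤ h := by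
  rcases (infDist_nonneg (x := z) (s := M)).eq_or_lt with hz₀ | hz₀
  · simp [normalStep, unitNormal, ← hz₀, hh]
  · rw [normalStep, dist_eq_norm, add_sub_cancel_left, norm_smul, hr.norm_unitNormal hz hz₀,
      Real.norm_of_nonneg hh, mul_one]

theorem add_le_infDist_normalStep (hr : ReachAtLeast M τ) {d₀ h θ : ℝ} (hd₀ : 0 < d₀)
    (hz : d₀ ≤ infDist z M) (hzτ : infDist z M < τ) (hstep : infDist (normalStep M h z) M < τ)
    (hh : 0 ≤ h) (hθ : θ ≤ 2)
    (hmove : dist (nearestPt M z) (nearestPt M (normalStep M h z)) ≤ θ * d₀) :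
    infDist z M + (1 - θ) * h ≤ infDist (normalStep M h z) M := by
  set d := infDist z M
  have hdpos : 0 < d := hd₀.trans_le hz
  obtain ⟨hq'M, hq'⟩ := hr.nearestPt_spec hstep
  have hξz := nearestPt_add_smul_unitNormal hdpos.ne'
  have hsq := sq_sub_le_dist_add_smul_sq (hr.norm_unitNormal hzτ hdpos) hdpos.le hh
    (by rw [hξz]; exact infDist_le_dist_of_mem hq'M) hmove
  rw [add_smul, ← add_assoc, hξz, ← normalStep, hq'] at hsq
  have hθ0 : 0 ≤ θ := nonneg_of_mul_nonneg_left (dist_nonneg.trans hmove) hd₀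
  refine le_abs_self _ |>.trans (abs_le_of_sq_le_sq (hsq.trans' ?_) infDist_nonneg)
  nlinarith [mul_nonneg (mul_nonneg hθ0 hh) (sub_nonneg.2 hz), mul_nonneg (mul_nonneg hθ0 hh)
    (mul_nonneg (sub_nonneg.2 hθ) hh)]

theorem exists_dist_le_and_add_le_infDist [ProperSpace E] (hr : ReachAtLeast M τ) {z₀ : E}
    {L θ : ℝ} (hz₀ : 0 < infDist z₀ M) (hL : 0 ≤ L) (hLτ : infDist z₀ M + L < τ) (hθ : 0 < θ)
    (hθ1 : θ ≤ 1) : ∃ w, dist w z₀ ≤ L ∧ infDist z₀ M + (1 - θ) * L ≤ infDist w M := by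
  set d₀ := infDist z₀ M
  have hK : ∀ z ∈ closedBall z₀ L, infDist z M < τ := fun z hz =>
    infDist_le_infDist_add_dist.trans_lt (by linarith [mem_closedBall.1 hz])
  -- Steps shorter than `ρ` move footpoints by less than `θ d₀`, so each gains `(1 - θ) h`.
  obtain ⟨ρ, hρ, hξ⟩ := Metric.uniformContinuousOn_iff.1
    ((isCompact_closedBall z₀ L).uniformContinuousOn_of_continuous
      (hr.continuousOn_nearestPt.mono hK)) (θ * d₀) (by positivity)
  obtain ⟨N, hN⟩ := exists_nat_gt (L / ρ)
  have hNpos : (0 : ℝ) < N := (div_nonneg hL hρ.le).trans_lt hN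
  set h := L / N
  have hNh : N * h = L := mul_div_cancel₀ _ hNpos.ne'
  have hh : 0 ≤ h := div_nonneg hL hNpos.le
  have hhρ : h < ρ := by rwa [div_lt_iff₀ hNpos, mul_comm, ← div_lt_iff₀ hρ]
  rw [← hNh] at hK hξ
  have hstep : ∀ z ∈ closedBall z₀ (N * h), dist (normalStep M h z) z ≤ h := fun z hz =>
    hr.dist_normalStep_le (hK z hz) hh
  obtain ⟨hdist, hgain⟩ := dist_iterate_le_and_add_le (φ := fun z => infDist z M) hh
    (mul_nonneg (by linarith) hh) hstep
    (fun z hz hsz hd₀ => hr.add_le_infDist_normalStep (θ := θ) hz₀ hd₀ (hK z hz) (hK _ hsz) hh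
      (by linarith) (hξ z hz _ hsz (by rw [dist_comm]; exact (hstep z hz).trans_lt hhρ)).le)
    N le_rfl
  refine ⟨_, hNh ▸ hdist, le_of_eq_of_le ?_ hgain⟩
  rw [← hNh]
  ring

theorem le_infDist_add_smul [ProperSpace E] (hr : ReachAtLeast M τ) {p ν : E} {d R : ℝ}
    (hp : p ∈ M) (hν : ‖ν‖ = 1) (hd : 0 < d) (hpd : infDist (p + d • ν) M = d) (hdR : d ≤ R)
    (hRτ : R < τ) : R ≤ infDist (p + R • ν) M := by
  set L := R - d
  have hL : 0 ≤ L := sub_nonneg.2 hdR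
  have hRdL : R = d + L := by ring
  set C := 2 * L * R * L / d
  have hlower : ∀ θ ∈ Ioc (0 : ℝ) 1, R - θ * L - √(C * θ) ≤ infDist (p + R • ν) M := by
    rintro θ ⟨hθ, hθ1⟩
    obtain ⟨w, hw₀, hw⟩ := hr.exists_dist_le_and_add_le_infDist (hpd ▸ hd) hL
      (by rw [hpd]; linarith) hθ hθ1
    rw [hpd] at hw
    -- `w` is within `L` of `p + d • ν` and almost `R` away from `p`, hence close to `p + R • ν`.
    have hclose := dist_add_smul_sq_le hν hd (by nlinarith) hw₀
      ((by linarith : d + L - θ * L ≤ _).trans (hw.trans (infDist_le_dist_of_mem hp)))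
    rw [← hRdL] at hclose
    have : dist w (p + R • ν) ≤ √(C * θ) :=
      Real.le_sqrt_of_sq_le (hclose.trans_eq (by simp only [C]; ring))
    linarith [infDist_le_infDist_add_dist (x := w) (y := p + R • ν) (s := M)]
  have hlim : Tendsto (fun θ => R - θ * L - √(C * θ)) (𝓝[>] 0) (𝓝 R) := by
    have : Continuous fun θ => R - θ * L - √(C * θ) := by fun_prop
    simpa using (this.tendsto 0).mono_left nhdsWithin_le_nhds
  exact le_of_tendsto hlim (eventually_of_mem (Ioc_mem_nhdsGT one_pos) hlower)

theorem inner_sub_nearestPt_le [ProperSpace E] (hr : ReachAtLeast M τ) {R : ℝ}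
    (hzR : infDist z M ≤ R) (hRτ : R < τ) {y : E} (hy : y ∈ M) :
    ⟪z - nearestPt M z, y - nearestPt M z⟫ ≤ infDist z M * ‖y - nearestPt M z‖ ^ 2 / (2 * R) := by
  have hz := hzR.trans_lt hRτ
  obtain ⟨hpM, hzp⟩ := hr.nearestPt_spec hz
  rcases (infDist_nonneg (x := z) (s := M)).eq_or_lt with hz₀ | hz₀
  · rw [sub_eq_zero.2 (dist_eq_zero.1 (hzp.trans hz₀.symm)), inner_zero_left, ← hz₀, zero_mul,
      zero_div]
  set p := nearestPt M z
  set ν := unitNormal M z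
  have hν := hr.norm_unitNormal hz hz₀
  have hR : 0 < R := hz₀.trans_le hzR
  have hpz : p + infDist z M • ν = z := nearestPt_add_smul_unitNormal hz₀.ne'
  have hfar := hr.le_infDist_add_smul hpM hν hz₀ (by rw [hpz]) hzR hRτ
  rw [← eq_sub_iff_add_eq'] at hpz
  have hkey : 2 * ⟪R • ν, y - p⟫ ≤ ‖y - p‖ ^ 2 := by
    refine two_mul_inner_le_norm_sq_of_norm_le_norm_sub ?_
    rw [norm_smul, hν, Real.norm_of_nonneg hR.le, mul_one, sub_sub_eq_add_sub, add_comm,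
      ← dist_eq_norm]
    exact hfar.trans (infDist_le_dist_of_mem hy)
  rw [real_inner_smul_left] at hkey
  rw [← hpz, real_inner_smul_left, le_div_iff₀ (by positivity)]
  nlinarith [mul_le_mul_of_nonneg_left hkey hz₀.le]

theorem sq_norm_nearestPt_sub_le (hr : ReachAtLeast M τ) {x v : E} (hx : x ∈ M) {t : ℝ}
    (ht : 0 < t) (htτ : t * ‖v‖ < τ) :
    ‖nearestPt M (x + t • v) - x‖ ^ 2 ≤ 2 * t * ⟪v, nearestPt M (x + t • v) - x⟫ := by
  have hdist := infDist_add_smul_le hx v ht.le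
  rw [← (hr.nearestPt_spec (hdist.trans_lt htτ)).2, dist_eq_norm,
    show x + t • v - nearestPt M (x + t • v) = t • v - (nearestPt M (x + t • v) - x) by abel,
    show t * ‖v‖ = ‖t • v‖ by rw [norm_smul, Real.norm_of_nonneg ht.le]] at hdist
  rw [mul_assoc, ← real_inner_smul_left]
  exact norm_sq_le_two_mul_inner_of_norm_sub_le_norm hdist

theorem isLittleO_nearestPt_sub [ProperSpace E] (hr : ReachAtLeast M τ) (hτ : 0 < τ) {x v : E}
    (hx : x ∈ M) (hv : ∀ w ∈ tangentConeAt ℝ M x, ⟪v, w⟫ ≤ 0) :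
    (fun t : ℝ => nearestPt M (x + t • v) - x) =o[𝓝[>] 0] id := by
  set b := fun t : ℝ => nearestPt M (x + t • v)
  have ht : Tendsto (fun t : ℝ => t) (𝓝[>] 0) (𝓝 0) := tendsto_id.mono_left nhdsWithin_le_nhds
  have hsmall : ∀ᶠ t in 𝓝[>] (0 : ℝ), t * ‖v‖ < τ := by
    simpa using ht.mul_const ‖v‖ |>.eventually_lt_const (by simpa using hτ)
  -- The right side is `o(‖b t - x‖)` because `v` is normal to the tangent cone.
  have hfoot : ∀ᶠ t in 𝓝[>] (0 : ℝ), b t ∈ M ∧ ‖b t - x‖ ^ 2 ≤ 2 * t * ⟪v, b t - x⟫ := by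
    filter_upwards [hsmall, self_mem_nhdsWithin] with t ht (ht0 : 0 < t)
    exact ⟨(hr.nearestPt_spec ((infDist_add_smul_le hx v ht0.le).trans_lt ht)).1,
      hr.sq_norm_nearestPt_sub_le hx ht0 ht⟩
  have hb : Tendsto b (𝓝[>] 0) (𝓝[M] x) := by
    refine tendsto_nhdsWithin_iff.2 ⟨?_, hfoot.mono fun _ h => h.1⟩
    have hbound : ∀ᶠ t in 𝓝[>] (0 : ℝ), ‖b t - x‖ ≤ 2 * t * ‖v‖ := by
      filter_upwards [hfoot, self_mem_nhdsWithin] with t h (ht0 : 0 < t)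
      have hsq := h.2.trans (mul_le_mul_of_nonneg_left (real_inner_le_norm v (b t - x))
        (by positivity))
      by_contra! hlt
      have hpos : 0 < ‖b t - x‖ := (by positivity : 0 ≤ 2 * t * ‖v‖).trans_lt hlt
      nlinarith [mul_lt_mul_of_pos_right hlt hpos]
    refine tendsto_iff_norm_sub_tendsto_zero.2 (squeeze_zero' (Eventually.of_forall fun _ =>
      norm_nonneg _) hbound ?_)
    simpa using (ht.const_mul 2).mul_const ‖v‖
  refine isLittleO_iff.2 fun c hc => ?_
  filter_upwards [hfoot, hb.eventually (eventually_inner_sub_le_mul_norm_sub hv (half_pos hc)),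
    self_mem_nhdsWithin] with t hsq hcone (ht0 : 0 < t)
  change ‖b t - x‖ ≤ c * |t|
  rw [abs_of_pos ht0]
  by_contra! hlt
  have hpos : 0 < ‖b t - x‖ := (by positivity : 0 ≤ c * t).trans_lt hlt
  nlinarith [mul_lt_mul_of_pos_right hlt hpos, mul_le_mul_of_nonneg_left hcone
    (by positivity : 0 ≤ 2 * t)]

theorem inner_sub_le_of_inner_tangentCone_nonpos [ProperSpace E] (hr : ReachAtLeast M τ)
    (hτ : 0 < τ) {x y v : E} (hx : x ∈ M) (hy : y ∈ M)
    (hv : ∀ w ∈ tangentConeAt ℝ M x, ⟪v, w⟫ ≤ 0) :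
    ⟪v, y - x⟫ ≤ ‖v‖ * (‖y - x‖ ^ 2 / (2 * τ)) := by
  set b := fun t : ℝ => nearestPt M (x + t • v)
  have ho := hr.isLittleO_nearestPt_sub hτ hx hv
  have ht : Tendsto (fun t : ℝ => t) (𝓝[>] 0) (𝓝 0) := tendsto_id.mono_left nhdsWithin_le_nhds
  have hb : Tendsto b (𝓝[>] 0) (𝓝 x) := by
    simpa using (ho.trans_tendsto ht).add_const x
  have hdir : Tendsto (fun t => t⁻¹ • (x + t • v - b t)) (𝓝[>] 0) (𝓝 v) := by
    have := tendsto_const_nhds (x := v) |>.sub ho.tendsto_inv_smul_nhds_zero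
    rw [sub_zero] at this
    refine this.congr' (eventually_nhdsWithin_of_forall fun t (ht0 : 0 < t) => ?_)
    simp only [id, smul_sub, smul_add, smul_smul, inv_mul_cancel₀ ht0.ne', one_smul]
    abel
  have hrhs : Tendsto (fun t => ‖v‖ * (‖y - b t‖ ^ 2 / (2 * (τ - t)))) (𝓝[>] 0)
      (𝓝 (‖v‖ * (‖y - x‖ ^ 2 / (2 * τ)))) := by
    have hden : Tendsto (fun t : ℝ => 2 * (τ - t)) (𝓝[>] 0) (𝓝 (2 * τ)) := by
      simpa using (tendsto_const_nhds.sub ht).const_mul 2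
    exact tendsto_const_nhds.mul (((tendsto_const_nhds.sub hb).norm.pow 2).div hden
      (by positivity))
  have hsmall : ∀ᶠ t in 𝓝[>] (0 : ℝ), t * (‖v‖ + 1) < τ := by
    simpa using ht.mul_const (‖v‖ + 1) |>.eventually_lt_const (by simpa using hτ)
  refine le_of_tendsto_of_tendsto (hdir.inner (tendsto_const_nhds.sub hb)) hrhs ?_
  filter_upwards [hsmall, self_mem_nhdsWithin] with t hts (ht0 : 0 < t)
  have hdz := infDist_add_smul_le hx v ht0.le
  have hfoot := hr.inner_sub_nearestPt_le (hdz.trans (by linarith : t * ‖v‖ ≤ τ - t))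
    (by linarith : τ - t < τ) hy
  have hτt : 0 ≤ 2 * (τ - t) := by nlinarith [norm_nonneg v]
  rw [real_inner_smul_left, inv_mul_le_iff₀ ht0]
  calc _ ≤ _ := hfoot
    _ ≤ t * ‖v‖ * ‖y - b t‖ ^ 2 / (2 * (τ - t)) := by gcongr
    _ = _ := by ring

end ReachAtLeast

end Reach

theorem dist_to_tangent_le_of_reach_general
    (D : ℕ) (M : Set (EuclideanSpace ℝ (Fin D)))
    (τ : ℝ) (hτ : 0 < τ)
    (hreach : ∀ z : EuclideanSpace ℝ (Fin D), infDist z M < τ →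
      ∃! y, y ∈ M ∧ dist z y = infDist z M)
    (x y : EuclideanSpace ℝ (Fin D)) (hx : x ∈ M) (hy : y ∈ M)
    (T : Submodule ℝ (EuclideanSpace ℝ (Fin D)))
    (hT : (T : Set (EuclideanSpace ℝ (Fin D))) = tangentConeAt ℝ M x) :
    infDist y ((fun v => x + v) '' (T : Set (EuclideanSpace ℝ (Fin D))))
      ≤ ‖x - y‖ ^ 2 / (2 * τ) := by
  have hr : ReachAtLeast M τ := hreach
  obtain ⟨u, hu, n, hn, hyx⟩ := T.exists_add_mem_mem_orthogonal (y - x)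
  have hnT : ∀ w ∈ tangentConeAt ℝ M x, ⟪n, w⟫ ≤ 0 := fun w hw =>
    (Submodule.inner_left_of_mem_orthogonal (by rwa [← SetLike.mem_coe, hT]) hn).le
  have hbound := hr.inner_sub_le_of_inner_tangentCone_nonpos hτ hx hy hnT
  rw [hyx, inner_add_right, Submodule.inner_left_of_mem_orthogonal hu hn, zero_add,
    real_inner_self_eq_norm_sq, ← hyx, norm_sub_rev] at hbound
  have hdist : dist y (x + u) = ‖n‖ := by
    rw [dist_eq_norm, show y - (x + u) = y - x - u by abel, hyx, add_sub_cancel_left]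
  calc infDist y ((fun v => x + v) '' (T : Set (EuclideanSpace ℝ (Fin D))))
      ≤ ‖n‖ := hdist ▸ infDist_le_dist_of_mem ⟨u, hu, rfl⟩
    _ ≤ ‖x - y‖ ^ 2 / (2 * τ) := by
      have : 0 ≤ ‖x - y‖ ^ 2 / (2 * τ) := by positivity
      nlinarith [norm_nonneg n]

/-- Federer's reach inequality: if M is a closed subset of ℝ^D with reach at least τ > 0
(every point at distance < τ from M has a unique nearest point in M), then for any two
distinct points x, y ∈ M, the distance from y to the affine tangent space x + T_x M
satisfies d(y, x + T_x M) ≤ ‖x − y‖² / (2τ). -/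
theorem dist_to_tangent_le_of_reach
    (D : ℕ) (M : Set (EuclideanSpace ℝ (Fin D))) (hM : IsClosed M)
    (τ : ℝ) (hτ : 0 < τ)
    (hreach : ∀ z : EuclideanSpace ℝ (Fin D), infDist z M < τ →
      ∃! y, y ∈ M ∧ dist z y = infDist z M)
    (x y : EuclideanSpace ℝ (Fin D)) (hx : x ∈ M) (hy : y ∈ M) (hxy : x ≠ y)
    (T : Submodule ℝ (EuclideanSpace ℝ (Fin D)))
    (hT : (T : Set (EuclideanSpace ℝ (Fin D))) = tangentConeAt ℝ M x) :
    infDist y ((fun v => x + v) '' (T : Set (EuclideanSpace ℝ (Fin D))))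
      ≤ ‖x - y‖ ^ 2 / (2 * τ) :=
  dist_to_tangent_le_of_reach_general D M τ hτ hreach x y hx hy T hT
end

section
/- Let Λ and Λ̂ be symmetric n×n real matrices with eigenvalues λ₁ ≥ ⋯ ≥ λ_n and λ̂₁ ≥ ⋯ ≥ λ̂_n, and suppose λ_d > 0 and λ_{d+1} = 0 for some 1 ≤ d ≤ n. Let U, Û ∈ ℝ^{n×d} have orthonormal columns equal to eigenvectors of Λ and Λ̂ corresponding to their d largest eigenvalues. Then ‖UUᵀ − ÛÛᵀ‖_F ≤ (2√2 ‖Λ̂ − Λ‖_F)/λ_d. -/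
open Matrix

noncomputable def frobNorm {m n : ℕ} (A : Matrix (Fin m) (Fin n) ℝ) : ℝ :=
  Real.sqrt (∑ i, ∑ j, A i j ^ 2)

/-!
Write `Π = UUᵀ = P diag(g) Pᵀ` and `Π̂ = ÛÛᵀ = P̂ diag(g) P̂ᵀ`, where `g` is the indicator of the
top `d` indices. The trace of a product of two such spectral matrices is a bilinear form in their
eigenvalue vectors, taken against the matrix `M = ((PᵀP̂)ᵢⱼ²)`, which is doubly stochastic.
Comparing every eigenvalue with a threshold then gives Ky Fan's inequality
`tr(Λ̂Π) ≤ tr(Λ̂Π̂)` (threshold `λ̂_d`) and the gap inequality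
`tr(ΛΠ) - tr(ΛΠ̂) ≥ λ_d (d - tr(ΠΠ̂)) = λ_d ‖Π - Π̂‖² / 2` (thresholds `λ_d` and `0`).
Adding them, `λ_d ‖Π - Π̂‖² / 2 ≤ ⟨Λ - Λ̂, Π - Π̂⟩ ≤ ‖Λ̂ - Λ‖ ‖Π - Π̂‖` by Cauchy–Schwarz, so
`‖Π - Π̂‖ ≤ 2 ‖Λ̂ - Λ‖ / λ_d`, which is stronger than the claim by a factor `√2`.
-/

section Frobenius

variable {m n : ℕ}

theorem frobNorm_sq (A : Matrix (Fin m) (Fin n) ℝ) : frobNorm A ^ 2 = trace (A * Aᵀ) := by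
  rw [frobNorm, Real.sq_sqrt (by positivity)]
  simp [trace, mul_apply, sq]

theorem frobNorm_nonneg (A : Matrix (Fin m) (Fin n) ℝ) : 0 ≤ frobNorm A :=
  Real.sqrt_nonneg _

theorem frobNorm_sub_comm (A B : Matrix (Fin m) (Fin n) ℝ) :
    frobNorm (A - B) = frobNorm (B - A) := by
  rw [← neg_sub]
  simp only [frobNorm, Matrix.neg_apply, neg_sq]

theorem trace_mul_transpose_le_frobNorm_mul (A B : Matrix (Fin m) (Fin n) ℝ) :
    trace (A * Bᵀ) ≤ frobNorm A * frobNorm B := by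
  simpa [frobNorm, trace, mul_apply, Fintype.sum_prod_type] using
    Real.sum_mul_le_sqrt_mul_sqrt Finset.univ (fun p : Fin m × Fin n ↦ A p.1 p.2)
      (fun p ↦ B p.1 p.2)

end Frobenius

section Conjugation

variable {ι κ R : Type*} [Fintype ι] [DecidableEq ι] [CommRing R]

theorem transpose_conj_diagonal (P : Matrix ι ι R) (a : ι → R) :
    (P * diagonal a * Pᵀ)ᵀ = P * diagonal a * Pᵀ := by
  simp [transpose_mul, Matrix.mul_assoc]

theorem trace_conj_diagonal_mul_conj_diagonal (P Q : Matrix ι ι R) (a b : ι → R) :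
    trace (P * diagonal a * Pᵀ * (Q * diagonal b * Qᵀ))
      = a ⬝ᵥ ((Pᵀ * Q).map (· ^ 2) *ᵥ b) := by
  rw [Matrix.mul_assoc, Matrix.mul_assoc, trace_mul_comm,
    show diagonal a * (Pᵀ * (Q * diagonal b * Qᵀ)) * P
      = diagonal a * (Pᵀ * Q * diagonal b * (Pᵀ * Q)ᵀ) by
      simp only [transpose_mul, transpose_transpose, Matrix.mul_assoc]]
  generalize Pᵀ * Q = W
  simp only [trace, diag_apply, diagonal_mul, dotProduct, mulVec, map_apply]
  refine Finset.sum_congr rfl fun i _ ↦ ?_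
  rw [mul_apply]
  simp only [mul_diagonal, transpose_apply]
  exact congrArg _ (Finset.sum_congr rfl fun j _ ↦ by ring)

theorem mul_transpose_submatrix_eq_conj_diagonal [Fintype κ] (Q : Matrix ι ι R) {e : κ → ι}
    (he : Function.Injective e) :
    Q.submatrix id e * (Q.submatrix id e)ᵀ = Q * diagonal ((Set.range e).indicator 1) * Qᵀ := by
  ext i j
  rw [mul_apply, mul_apply]
  simp only [mul_diagonal, submatrix_apply, transpose_apply, id]
  refine Fintype.sum_of_injective e he _ _ (fun l hl ↦ ?_) (fun k ↦ ?_)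
  · simp [Set.indicator_of_notMem hl]
  · simp

theorem trace_conj_diagonal_mul_conj_diagonal_self {P : Matrix ι ι R} (hP : Pᵀ * P = 1)
    (a b : ι → R) : trace (P * diagonal a * Pᵀ * (P * diagonal b * Pᵀ)) = a ⬝ᵥ b := by
  rw [trace_conj_diagonal_mul_conj_diagonal, hP,
    Matrix.map_one (· ^ 2) (zero_pow two_ne_zero) (one_pow 2), one_mulVec]

end Conjugation

section Stochastic

variable {ι : Type*} [Fintype ι]

theorem dotProduct_sub_indicator_le {lam c : ι → ℝ} {s : Set ι} {μ ν : ℝ}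
    (hc₀ : 0 ≤ c) (hc₁ : c ≤ 1) (hs : ∀ i ∈ s, μ ≤ lam i) (hsc : ∀ i ∉ s, lam i ≤ ν) :
    lam ⬝ᵥ (c - s.indicator 1)
      ≤ μ * (s.indicator 1 ⬝ᵥ (c - s.indicator 1)) + ν * (sᶜ.indicator 1 ⬝ᵥ c) := by
  simp only [dotProduct, Finset.mul_sum, ← Finset.sum_add_distrib]
  refine Finset.sum_le_sum fun i _ ↦ ?_
  by_cases hi : i ∈ s
  · simp only [Pi.sub_apply, Pi.one_apply, Set.indicator_of_mem hi,
      Set.indicator_of_notMem (Set.notMem_compl_iff.2 hi)]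
    have hci : c i ≤ 1 := hc₁ i
    nlinarith [mul_nonneg (sub_nonneg.2 (hs i hi)) (sub_nonneg.2 hci)]
  · simp only [Pi.sub_apply, Pi.one_apply, Set.indicator_of_notMem hi,
      Set.indicator_of_mem (Set.mem_compl hi)]
    have hci : 0 ≤ c i := hc₀ i
    nlinarith [mul_nonneg (sub_nonneg.2 (hsc i hi)) hci]

variable [DecidableEq ι]

theorem map_sq_transpose_mul_mem_doublyStochastic {P Q : Matrix ι ι ℝ} (hP : Pᵀ * P = 1)
    (hQ : Qᵀ * Q = 1) : (Pᵀ * Q).map (· ^ 2) ∈ doublyStochastic ℝ ι := by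
  have hW : (Pᵀ * Q)ᵀ * (Pᵀ * Q) = 1 := by
    rw [transpose_mul, transpose_transpose, Matrix.mul_assoc, ← Matrix.mul_assoc P,
      mul_eq_one_comm.mp hP, Matrix.one_mul, hQ]
  generalize Pᵀ * Q = W at hW ⊢
  have hW' : W * Wᵀ = 1 := mul_eq_one_comm.mp hW
  refine mem_doublyStochastic_iff_sum.mpr ⟨fun i j ↦ sq_nonneg _, fun i ↦ ?_, fun j ↦ ?_⟩
  · simpa [mul_apply, sq] using congrFun (congrFun hW' i) i
  · simpa [mul_apply, sq] using congrFun (congrFun hW j) j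

theorem mulVec_le_one_of_mem_rowStochastic {M : Matrix ι ι ℝ} (hM : M ∈ rowStochastic ℝ ι)
    {x : ι → ℝ} (hx : x ≤ 1) : M *ᵥ x ≤ 1 := by
  intro i
  have h := nonneg_mulVec_of_mem_rowStochastic hM (x := 1 - x) (fun j ↦ sub_nonneg.2 (hx j)) i
  rw [mulVec_sub, one_vecMul_of_mem_rowStochastic hM] at h
  simpa using h

variable {M : Matrix ι ι ℝ} (hM : M ∈ doublyStochastic ℝ ι) {lam : ι → ℝ} {s : Set ι}
include hM

theorem mulVec_indicator_mem_Icc : M *ᵥ s.indicator 1 ∈ Set.Icc 0 1 := by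
  rw [mem_doublyStochastic_iff_mem_rowStochastic_and_mem_colStochastic] at hM
  have h₀ : 0 ≤ s.indicator (1 : ι → ℝ) := Set.indicator_nonneg fun _ _ ↦ zero_le_one
  have h₁ : s.indicator (1 : ι → ℝ) ≤ 1 := Set.indicator_le_self' fun _ _ ↦ zero_le_one
  exact ⟨nonneg_mulVec_of_mem_rowStochastic hM.1 h₀,
    mulVec_le_one_of_mem_rowStochastic hM.1 h₁⟩

theorem dotProduct_mulVec_indicator_le {ν : ℝ} (hs : ∀ i ∈ s, ν ≤ lam i)
    (hsc : ∀ i ∉ s, lam i ≤ ν) :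
    lam ⬝ᵥ (M *ᵥ s.indicator 1) ≤ lam ⬝ᵥ s.indicator 1 := by
  have h := dotProduct_sub_indicator_le (mulVec_indicator_mem_Icc hM (s := s)).1
    (mulVec_indicator_mem_Icc hM (s := s)).2 hs hsc
  have hsum : s.indicator 1 ⬝ᵥ (M *ᵥ s.indicator 1 - s.indicator 1)
      + sᶜ.indicator 1 ⬝ᵥ (M *ᵥ s.indicator 1) = 0 := by
    rw [dotProduct_sub, sub_add_eq_add_sub, ← add_dotProduct, Set.indicator_self_add_compl,
      one_dotProduct, sum_mulVec_of_mem_doublyStochastic hM]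
    simp only [dotProduct, sub_eq_zero]
    refine Finset.sum_congr rfl fun i _ ↦ ?_
    by_cases hi : i ∈ s <;> simp [hi]
  rwa [← mul_add, hsum, mul_zero, dotProduct_sub, sub_nonpos] at h

theorem dotProduct_mulVec_indicator_sub_le {μ : ℝ} (hs : ∀ i ∈ s, μ ≤ lam i)
    (hsc : ∀ i ∉ s, lam i ≤ 0) :
    lam ⬝ᵥ (M *ᵥ s.indicator 1 - s.indicator 1)
      ≤ μ * (s.indicator 1 ⬝ᵥ (M *ᵥ s.indicator 1 - s.indicator 1)) := by
  simpa using dotProduct_sub_indicator_le (mulVec_indicator_mem_Icc hM (s := s)).1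
    (mulVec_indicator_mem_Icc hM (s := s)).2 hs hsc

end Stochastic

theorem mul_frobNorm_sq_le_two_mul_frobNorm_mul {n : ℕ} {P Q : Matrix (Fin n) (Fin n) ℝ}
    (hP : Pᵀ * P = 1) (hQ : Qᵀ * Q = 1) {a b : Fin n → ℝ} {s : Set (Fin n)} {μ ν : ℝ}
    (ha : ∀ i ∈ s, μ ≤ a i) (ha' : ∀ i ∉ s, a i ≤ 0) (hb : ∀ i ∈ s, ν ≤ b i)
    (hb' : ∀ i ∉ s, b i ≤ ν) :
    μ * frobNorm (P * diagonal (s.indicator 1) * Pᵀ - Q * diagonal (s.indicator 1) * Qᵀ) ^ 2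
      ≤ 2 * frobNorm (Q * diagonal b * Qᵀ - P * diagonal a * Pᵀ) *
          frobNorm (P * diagonal (s.indicator 1) * Pᵀ - Q * diagonal (s.indicator 1) * Qᵀ) := by
  set g : Fin n → ℝ := s.indicator 1
  set M := (Pᵀ * Q).map (· ^ 2)
  have hgap := dotProduct_mulVec_indicator_sub_le
    (map_sq_transpose_mul_mem_doublyStochastic hP hQ) ha ha'
  have hkyFan := dotProduct_mulVec_indicator_le
    (map_sq_transpose_mul_mem_doublyStochastic hQ hP) hb hb'
  have hnorm : frobNorm (P * diagonal g * Pᵀ - Q * diagonal g * Qᵀ) ^ 2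
      = -2 * (g ⬝ᵥ (M *ᵥ g - g)) := by
    rw [frobNorm_sq, transpose_sub, transpose_conj_diagonal, transpose_conj_diagonal, sub_mul,
      mul_sub, mul_sub, trace_sub, trace_sub, trace_sub, trace_mul_comm (Q * _ * _),
      trace_conj_diagonal_mul_conj_diagonal_self hP,
      trace_conj_diagonal_mul_conj_diagonal_self hQ, trace_conj_diagonal_mul_conj_diagonal,
      dotProduct_sub]
    ring
  have hinner : trace ((P * diagonal a * Pᵀ - Q * diagonal b * Qᵀ) *
      (P * diagonal g * Pᵀ - Q * diagonal g * Qᵀ)ᵀ)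
      = b ⬝ᵥ g - b ⬝ᵥ ((Qᵀ * P).map (· ^ 2) *ᵥ g) - a ⬝ᵥ (M *ᵥ g - g) := by
    rw [transpose_sub, transpose_conj_diagonal, transpose_conj_diagonal, sub_mul, mul_sub,
      mul_sub, trace_sub, trace_sub, trace_sub, trace_conj_diagonal_mul_conj_diagonal_self hP,
      trace_conj_diagonal_mul_conj_diagonal_self hQ, trace_conj_diagonal_mul_conj_diagonal,
      trace_conj_diagonal_mul_conj_diagonal, dotProduct_sub]
    ring
  have hCS := trace_mul_transpose_le_frobNorm_mul (P * diagonal a * Pᵀ - Q * diagonal b * Qᵀ)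
    (P * diagonal g * Pᵀ - Q * diagonal g * Qᵀ)
  rw [hinner, frobNorm_sub_comm] at hCS
  rw [hnorm]
  linarith

theorem le_div_of_mul_sq_le_mul {μ x c : ℝ} (hμ : 0 < μ) (hc : 0 ≤ c)
    (h : μ * x ^ 2 ≤ c * x) : x ≤ c / μ := by
  rw [le_div_iff₀ hμ]
  nlinarith

/-- Davis–Kahan type bound: if Λ and Λ̂ are symmetric n×n matrices with eigenvalue
decompositions Λ = P diag(λ) Pᵀ, Λ̂ = P̂ diag(λ̂) P̂ᵀ (λ, λ̂ sorted in decreasing order),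
λ_d > 0, λ_{d+1} = 0, and U (resp. Û) collects the first d columns of P (resp. P̂),
then ‖UUᵀ − ÛÛᵀ‖_F ≤ 2√2 ‖Λ̂ − Λ‖_F / λ_d. -/
theorem davis_kahan_projection_bound
    (n d : ℕ) (hd : 1 ≤ d) (hdn : d < n)
    (Λ Λhat : Matrix (Fin n) (Fin n) ℝ)
    (lam lamhat : Fin n → ℝ)
    (hlam : ∀ i j : Fin n, i ≤ j → lam j ≤ lam i)
    (hlamhat : ∀ i j : Fin n, i ≤ j → lamhat j ≤ lamhat i)
    (P Phat : Matrix (Fin n) (Fin n) ℝ)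
    (hP : Pᵀ * P = 1) (hPhat : Phatᵀ * Phat = 1)
    (hΛ : Λ = P * Matrix.diagonal lam * Pᵀ)
    (hΛhat : Λhat = Phat * Matrix.diagonal lamhat * Phatᵀ)
    (hpos : 0 < lam ⟨d - 1, lt_trans (Nat.sub_lt hd Nat.one_pos) hdn⟩)
    (hzero : lam ⟨d, hdn⟩ = 0)
    (U Uhat : Matrix (Fin n) (Fin d) ℝ)
    (hU : ∀ (i : Fin n) (j : Fin d), U i j = P i (Fin.castLE hdn.le j))
    (hUhat : ∀ (i : Fin n) (j : Fin d), Uhat i j = Phat i (Fin.castLE hdn.le j)) :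
    frobNorm (U * Uᵀ - Uhat * Uhatᵀ)
      ≤ 2 * Real.sqrt 2 * frobNorm (Λhat - Λ)
          / lam ⟨d - 1, lt_trans (Nat.sub_lt hd Nat.one_pos) hdn⟩ := by
  obtain rfl : U = P.submatrix id (Fin.castLE hdn.le) := Matrix.ext hU
  obtain rfl : Uhat = Phat.submatrix id (Fin.castLE hdn.le) := Matrix.ext hUhat
  rw [mul_transpose_submatrix_eq_conj_diagonal _ (Fin.castLE_injective _),
    mul_transpose_submatrix_eq_conj_diagonal _ (Fin.castLE_injective _), Fin.range_castLE]
  have htop : ∀ i : Fin n, (i : ℕ) < d → i ≤ ⟨d - 1, by omega⟩ := fun i hi ↦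
    Fin.le_def.2 (show (i : ℕ) ≤ d - 1 by omega)
  have hbelow : ∀ i : Fin n, ¬(i : ℕ) < d → ⟨d, hdn⟩ ≤ i := fun i hi ↦
    Fin.le_def.2 (show d ≤ (i : ℕ) by omega)
  have key := mul_frobNorm_sq_le_two_mul_frobNorm_mul hP hPhat (a := lam) (b := lamhat)
    (s := {i | (i : ℕ) < d}) (ν := lamhat ⟨d - 1, by omega⟩)
    (fun i hi ↦ hlam _ _ (htop i hi)) (fun i hi ↦ hzero ▸ hlam _ _ (hbelow i hi))
    (fun i hi ↦ hlamhat _ _ (htop i hi))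
    (fun i hi ↦ hlamhat _ _ ((Fin.le_def.2 (Nat.sub_le d 1)).trans (hbelow i hi)))
  rw [← hΛ, ← hΛhat] at key
  calc _ ≤ 2 * frobNorm (Λhat - Λ) / lam ⟨d - 1, _⟩ :=
        le_div_of_mul_sq_le_mul hpos (mul_nonneg zero_le_two (frobNorm_nonneg _)) key
    _ ≤ 2 * Real.sqrt 2 * frobNorm (Λhat - Λ) / lam ⟨d - 1, _⟩ := by
        gcongr
        · exact frobNorm_nonneg _
        · exact le_mul_of_one_le_right zero_le_two Real.one_lt_sqrt_two.le
end

section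
/- Fix r > 0, an integer β ≥ 2, and a point x_i ∈ ℝ^D. Define α̃_i(x) = (1 − ‖x − x_i‖₂²/r²)^β for ‖x − x_i‖₂ ≤ r and 0 otherwise. Then for any unit vectors u, v and any x with ‖x − x_i‖₂ ≤ r, |∂_v ∂_u α̃_i(x)| ≤ C(β)/r² · (α̃_i(x)^{(β−2)/β} · ‖x − x_i‖₂²/r² + α̃_i(x)^{(β−1)/β}), for an explicit constant C(β) depending only on β (for instance C(β) = 4β²). -/
/-- The bump weight α̃_i(x) = (1 − ‖x − x_i‖²/r²)^β for ‖x − x_i‖ ≤ r, and 0 otherwise. -/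
noncomputable def alphaTilde {D : ℕ} (r : ℝ) (β : ℕ) (xi : EuclideanSpace ℝ (Fin D))
    (x : EuclideanSpace ℝ (Fin D)) : ℝ :=
  if ‖x - xi‖ ≤ r then (1 - ‖x - xi‖ ^ 2 / r ^ 2) ^ β else 0

/-!
Everywhere, `α̃ = φ ∘ s` with `s y = 1 - ‖y - xᵢ‖² / r²` and `φ t = max t 0 ^ β`. For `β ≥ 2` the
function `φ` is `C¹` with `φ' t = β max t 0 ^ (β - 1)`, so `∂ᵤα̃ = β max s 0 ^ (β - 1) ∂ᵤs` on all
of space. Unless `β = 2` and `x` lies on the sphere, `max · 0 ^ (β - 1)` is differentiable at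
`s x`, and the product rule gives
`∂ᵥ∂ᵤα̃ x = β (β - 1) s^(β - 2) ∂ᵥs ∂ᵤs + β s^(β - 1) ∂ᵥ∂ᵤs` with `|∂s| ≤ 2‖x - xᵢ‖ / r²`,
`|∂²s| ≤ 2 / r²` and `s x ^ k = α̃ x ^ (k / β)`. In the remaining case `∂ᵤα̃` vanishes at `x` and
grows at most like `8 ‖y - x‖ / r²`, which bounds its derivative there (and `fderiv` is `0` where
none exists).
-/

open Filter Topology
open scoped RealInnerProductSpace

theorem hasDerivAt_max_zero_pow_of_pos {t : ℝ} (ht : 0 < t) (m : ℕ) :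
    HasDerivAt (fun t : ℝ => max t 0 ^ m) (m * max t 0 ^ (m - 1)) t := by
  have heq : (fun t : ℝ => max t 0 ^ m) =ᶠ[𝓝 t] fun t => t ^ m := by
    filter_upwards [lt_mem_nhds ht] with s hs
    rw [max_eq_left hs.le]
  rw [max_eq_left ht.le]
  exact (hasDerivAt_pow m t).congr_of_eventuallyEq heq

theorem hasDerivAt_max_zero_pow {m : ℕ} (hm : 2 ≤ m) (t : ℝ) :
    HasDerivAt (fun t : ℝ => max t 0 ^ m) (m * max t 0 ^ (m - 1)) t := by
  refine hasDerivAt_of_hasDerivAt_of_ne' (x := 0) (f := fun t : ℝ => max t 0 ^ m)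
    (g := fun t => m * max t 0 ^ (m - 1)) (fun s hs => ?_) ?_ ?_ t
  rcases hs.lt_or_gt with hs | hs
  · have heq : (fun t : ℝ => max t 0 ^ m) =ᶠ[𝓝 s] fun _ => 0 := by
      filter_upwards [gt_mem_nhds hs] with s hs
      rw [max_eq_right hs.le, zero_pow (by omega)]
    rw [max_eq_right hs.le, zero_pow (by omega), mul_zero]
    exact (hasDerivAt_const s (0 : ℝ)).congr_of_eventuallyEq heq
  · exact hasDerivAt_max_zero_pow_of_pos hs m
  all_goals fun_prop

theorem pow_rpow_natCast_sub_div {t : ℝ} (ht : 0 ≤ t) {n k : ℕ} (hk : k ≤ n) (hn : n ≠ 0) :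
    (t ^ n) ^ (((n : ℝ) - k) / n) = t ^ (n - k) := by
  rw [← Real.rpow_natCast t n, ← Real.rpow_mul ht, ← Real.rpow_natCast t (n - k),
    Nat.cast_sub hk]
  congr 1
  field_simp

section
variable {E : Type*} [NormedAddCommGroup E] {c : E} {r : ℝ}

theorem one_sub_norm_sub_sq_div_nonneg_iff (hr : 0 < r) (y : E) :
    0 ≤ 1 - ‖y - c‖ ^ 2 / r ^ 2 ↔ ‖y - c‖ ≤ r := by
  rw [sub_nonneg, div_le_one (by positivity),
    pow_le_pow_iff_left₀ (norm_nonneg _) hr.le two_ne_zero]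

theorem one_sub_norm_sub_sq_div_pos_iff (hr : 0 < r) (y : E) :
    0 < 1 - ‖y - c‖ ^ 2 / r ^ 2 ↔ ‖y - c‖ < r := by
  rw [sub_pos, div_lt_one (by positivity),
    pow_lt_pow_iff_left₀ (norm_nonneg _) hr.le two_ne_zero]

theorem max_one_sub_norm_sub_sq_div_mul_norm_le (hr : 0 < r) {x : E} (hx : ‖x - c‖ = r) (z : E) :
    max (1 - ‖z - c‖ ^ 2 / r ^ 2) 0 * ‖z - c‖ ≤ 2 * ‖z - x‖ := by
  rcases le_or_gt r ‖z - c‖ with hz | hz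
  · rw [max_eq_right (not_lt.mp ((one_sub_norm_sub_sq_div_pos_iff hr z).not.mpr hz.not_gt)),
      zero_mul]
    positivity
  have htri : r - ‖z - c‖ ≤ ‖z - x‖ := by
    simpa [hx, norm_sub_rev x z] using norm_sub_norm_le (x - c) (z - c)
  rw [max_eq_left ((one_sub_norm_sub_sq_div_pos_iff hr z).mpr hz).le]
  calc (1 - ‖z - c‖ ^ 2 / r ^ 2) * ‖z - c‖
      = 2 * (r - ‖z - c‖) * ((r + ‖z - c‖) * ‖z - c‖ / (2 * r ^ 2)) := by field_simp; ring
    _ ≤ 2 * (r - ‖z - c‖) * 1 := by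
        gcongr
        rw [div_le_one (by positivity)]; nlinarith [norm_nonneg (z - c)]
    _ ≤ 2 * ‖z - x‖ := by linarith

variable [InnerProductSpace ℝ E]

theorem hasFDerivAt_one_sub_norm_sub_sq_div (c : E) (r : ℝ) (y : E) :
    HasFDerivAt (fun y => 1 - ‖y - c‖ ^ 2 / r ^ 2) ((-(2 / r ^ 2)) • innerSL ℝ (y - c)) y := by
  have h := ((hasFDerivAt_sub_const (x := y) c).norm_sq.mul_const (r ^ 2)⁻¹).const_sub 1
  simp only [div_eq_mul_inv]
  refine h.congr_fderiv ?_
  ext w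
  simp only [map_sub, ContinuousLinearMap.comp_id, neg_apply, smul_apply, sub_apply,
    coe_innerSL_apply, nsmul_eq_mul, Nat.cast_ofNat, smul_eq_mul, neg_smul, neg_inj]
  ring

end

section
variable {D : ℕ} {r : ℝ} {β : ℕ} {xi : EuclideanSpace ℝ (Fin D)}

theorem alphaTilde_eq_max_pow (hr : 0 < r) (hβ : β ≠ 0) :
    alphaTilde r β xi = fun y => max (1 - ‖y - xi‖ ^ 2 / r ^ 2) 0 ^ β := by
  funext y
  rw [alphaTilde]
  split_ifs with h
  · rw [max_eq_left ((one_sub_norm_sub_sq_div_nonneg_iff hr y).mpr h)]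
  · rw [max_eq_right (not_le.mp (mt (one_sub_norm_sub_sq_div_nonneg_iff hr y).mp h)).le,
      zero_pow hβ]

theorem fderiv_alphaTilde_apply (hr : 0 < r) (hβ : 2 ≤ β) (y u : EuclideanSpace ℝ (Fin D)) :
    fderiv ℝ (alphaTilde r β xi) y u =
      β * max (1 - ‖y - xi‖ ^ 2 / r ^ 2) 0 ^ (β - 1) * (-(2 / r ^ 2) * ⟪y - xi, u⟫) := by
  have h : HasFDerivAt (fun y => max (1 - ‖y - xi‖ ^ 2 / r ^ 2) 0 ^ β) _ y :=
    (hasDerivAt_max_zero_pow hβ _).comp_hasFDerivAt y (hasFDerivAt_one_sub_norm_sub_sq_div xi r y)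
  rw [alphaTilde_eq_max_pow hr (by omega), h.fderiv]
  simp only [smul_apply, innerSL_apply_apply, smul_eq_mul]

theorem fderiv_fderiv_alphaTilde_apply_of_three_le_or_lt (hr : 0 < r) (hβ : 2 ≤ β)
    {x : EuclideanSpace ℝ (Fin D)} (hx : ‖x - xi‖ ≤ r) (hsmooth : 3 ≤ β ∨ ‖x - xi‖ < r)
    (u v : EuclideanSpace ℝ (Fin D)) :
    fderiv ℝ (fun y => fderiv ℝ (alphaTilde r β xi) y u) x v =
      β * (β - 1 : ℕ) * (1 - ‖x - xi‖ ^ 2 / r ^ 2) ^ (β - 2)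
          * (-(2 / r ^ 2) * ⟪x - xi, v⟫) * (-(2 / r ^ 2) * ⟪x - xi, u⟫)
        + β * (1 - ‖x - xi‖ ^ 2 / r ^ 2) ^ (β - 1) * (-(2 / r ^ 2) * ⟪u, v⟫) := by
  set M := 1 - ‖x - xi‖ ^ 2 / r ^ 2 with hMdef
  have hM : 0 ≤ M := (one_sub_norm_sub_sq_div_nonneg_iff hr x).mpr hx
  have hpow : HasDerivAt (fun t => max t 0 ^ (β - 1)) ((β - 1 : ℕ) * max M 0 ^ (β - 2)) M := by
    rw [show β - 2 = β - 1 - 1 by omega]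
    rcases hsmooth with h | h
    · exact hasDerivAt_max_zero_pow (by omega) M
    · exact hasDerivAt_max_zero_pow_of_pos ((one_sub_norm_sub_sq_div_pos_iff hr x).mpr h) _
  have hinner : HasFDerivAt (fun y => ⟪y - xi, u⟫) (innerSL ℝ u) x := by
    rw [funext fun y => real_inner_comm u (y - xi)]
    exact ((innerSL ℝ u).hasFDerivAt.comp x (hasFDerivAt_sub_const xi)).congr_fderiv
      (by ext; simp)
  have hg : HasFDerivAt
      (fun y => (β : ℝ) * max (1 - ‖y - xi‖ ^ 2 / r ^ 2) 0 ^ (β - 1) * (-(2 / r ^ 2) * ⟪y - xi, u⟫))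
      _ x :=
    ((hpow.comp_hasFDerivAt x (hasFDerivAt_one_sub_norm_sub_sq_div xi r x)).const_mul
      (β : ℝ)).mul (hinner.const_mul (-(2 / r ^ 2)))
  rw [funext (fderiv_alphaTilde_apply (xi := xi) hr hβ · u), hg.fderiv]
  simp only [add_apply, smul_apply, innerSL_apply_apply, smul_eq_mul, Function.comp_apply,
    ← hMdef, max_eq_left hM]
  ring

theorem abs_fderiv_fderiv_alphaTilde_le_of_three_le_or_lt (hr : 0 < r) (hβ : 2 ≤ β)
    {u v x : EuclideanSpace ℝ (Fin D)} (hu : ‖u‖ = 1) (hv : ‖v‖ = 1) (hx : ‖x - xi‖ ≤ r)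
    (hsmooth : 3 ≤ β ∨ ‖x - xi‖ < r) :
    |fderiv ℝ (fun y => fderiv ℝ (alphaTilde r β xi) y u) x v|
      ≤ 4 * (β : ℝ) ^ 2 / r ^ 2 * ((1 - ‖x - xi‖ ^ 2 / r ^ 2) ^ (β - 2) * (‖x - xi‖ ^ 2 / r ^ 2)
          + (1 - ‖x - xi‖ ^ 2 / r ^ 2) ^ (β - 1)) := by
  rw [fderiv_fderiv_alphaTilde_apply_of_three_le_or_lt hr hβ hx hsmooth]
  have hM : 0 ≤ 1 - ‖x - xi‖ ^ 2 / r ^ 2 := (one_sub_norm_sub_sq_div_nonneg_iff hr x).mpr hx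
  have hA : |⟪u, v⟫| ≤ 1 := by simpa [hu, hv] using abs_real_inner_le_norm u v
  have hB : |⟪x - xi, u⟫| ≤ ‖x - xi‖ := by simpa [hu] using abs_real_inner_le_norm (x - xi) u
  have hC : |⟪x - xi, v⟫| ≤ ‖x - xi‖ := by simpa [hv] using abs_real_inner_le_norm (x - xi) v
  have hP := pow_nonneg hM (β - 1)
  have hQ := pow_nonneg hM (β - 2)
  have hn := norm_nonneg (x - xi)
  have hβ1 : ((β - 1 : ℕ) : ℝ) ≤ β := Nat.cast_le.mpr (Nat.sub_le β 1)
  have hβ_one : (1 : ℝ) ≤ β := by exact_mod_cast (by omega : 1 ≤ β)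
  generalize ⟪u, v⟫ = A at *
  generalize ⟪x - xi, u⟫ = B at *
  generalize ⟪x - xi, v⟫ = C at *
  generalize (1 - ‖x - xi‖ ^ 2 / r ^ 2) ^ (β - 1) = P at *
  generalize (1 - ‖x - xi‖ ^ 2 / r ^ 2) ^ (β - 2) = Q at *
  generalize ‖x - xi‖ = n at *
  calc _ = |4 * β * (β - 1 : ℕ) / r ^ 4 * Q * (B * C) - 2 * β / r ^ 2 * P * A| := by
        congr 1; ring
    _ ≤ 4 * β * (β - 1 : ℕ) / r ^ 4 * Q * (n * n) + 2 * β / r ^ 2 * P * 1 := by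
        refine (abs_sub _ _).trans (add_le_add ?_ ?_)
        · rw [abs_mul, abs_of_nonneg (by positivity), abs_mul]
          gcongr
        · rw [abs_mul, abs_of_nonneg (by positivity)]
          gcongr
    _ ≤ 4 * β * β / r ^ 4 * Q * (n * n) + 4 * β * β / r ^ 2 * P * 1 := by
        gcongr
        linarith
    _ = 4 * β ^ 2 / r ^ 2 * (Q * (n ^ 2 / r ^ 2) + P) := by ring

theorem abs_fderiv_fderiv_alphaTilde_two_le_of_norm_eq (hr : 0 < r)
    {u v x : EuclideanSpace ℝ (Fin D)} (hu : ‖u‖ = 1) (hv : ‖v‖ = 1) (hx : ‖x - xi‖ = r) :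
    |fderiv ℝ (fun y => fderiv ℝ (alphaTilde r 2 xi) y u) x v| ≤ 8 / r ^ 2 := by
  rw [funext (fderiv_alphaTilde_apply (xi := xi) hr le_rfl · u)]
  set g := fun y : EuclideanSpace ℝ (Fin D) =>
    ((2 : ℕ) : ℝ) * max (1 - ‖y - xi‖ ^ 2 / r ^ 2) 0 ^ (2 - 1) * (-(2 / r ^ 2) * ⟪y - xi, u⟫)
  have hgx : g x = 0 := by simp [g, hx, div_self (pow_pos hr 2).ne']
  have hlip : ∀ z, ‖g z - g x‖ ≤ 8 / r ^ 2 * ‖z - x‖ := by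
    intro z
    have hM := max_one_sub_norm_sub_sq_div_mul_norm_le hr hx z
    have hinner : |⟪z - xi, u⟫| ≤ ‖z - xi‖ := by
      simpa [hu] using abs_real_inner_le_norm (z - xi) u
    rw [hgx, sub_zero, Real.norm_eq_abs]
    calc |g z| = 4 / r ^ 2 * (max (1 - ‖z - xi‖ ^ 2 / r ^ 2) 0 * |⟪z - xi, u⟫|) := by
          rw [show g z = -(4 / r ^ 2) * (max (1 - ‖z - xi‖ ^ 2 / r ^ 2) 0 * ⟪z - xi, u⟫) by
              simp only [g]; push_cast; ring,
            abs_mul, abs_neg, abs_of_pos (by positivity), abs_mul,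
            abs_of_nonneg (le_max_right _ _)]
      _ ≤ 4 / r ^ 2 * (2 * ‖z - x‖) :=
          mul_le_mul_of_nonneg_left
            ((mul_le_mul_of_nonneg_left hinner (le_max_right _ _)).trans hM) (by positivity)
      _ = 8 / r ^ 2 * ‖z - x‖ := by ring
  calc |fderiv ℝ g x v| ≤ ‖fderiv ℝ g x‖ * ‖v‖ := by
        simpa using (fderiv ℝ g x).le_opNorm v
    _ ≤ 8 / r ^ 2 := by
        rw [hv, mul_one]
        refine norm_fderiv_le_of_lip' ℝ ?_ (Eventually.of_forall hlip)
        positivity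

theorem abs_fderiv_fderiv_alphaTilde_le (hr : 0 < r) (hβ : 2 ≤ β)
    {u v x : EuclideanSpace ℝ (Fin D)} (hu : ‖u‖ = 1) (hv : ‖v‖ = 1) (hx : ‖x - xi‖ ≤ r) :
    |fderiv ℝ (fun y => fderiv ℝ (alphaTilde r β xi) y u) x v|
      ≤ 4 * (β : ℝ) ^ 2 / r ^ 2 * ((1 - ‖x - xi‖ ^ 2 / r ^ 2) ^ (β - 2) * (‖x - xi‖ ^ 2 / r ^ 2)
          + (1 - ‖x - xi‖ ^ 2 / r ^ 2) ^ (β - 1)) := by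
  by_cases hsmooth : 3 ≤ β ∨ ‖x - xi‖ < r
  · exact abs_fderiv_fderiv_alphaTilde_le_of_three_le_or_lt hr hβ hu hv hx hsmooth
  obtain ⟨rfl, hxr⟩ : β = 2 ∧ ‖x - xi‖ = r := by
    rw [not_or, not_le, not_lt] at hsmooth
    exact ⟨by omega, le_antisymm hx hsmooth.2⟩
  refine (abs_fderiv_fderiv_alphaTilde_two_le_of_norm_eq hr hu hv hxr).trans ?_
  rw [hxr, div_self (pow_pos hr 2).ne']
  norm_num
  gcongr
  norm_num

end

/-- For r > 0, integer β ≥ 2, unit vectors u, v and any x with ‖x − x_i‖ ≤ r, the second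
directional derivative of α̃_i satisfies
|∂_v ∂_u α̃_i(x)| ≤ (4β²/r²) (α̃_i(x)^{(β−2)/β} ‖x − x_i‖²/r² + α̃_i(x)^{(β−1)/β}). -/
theorem alphaTilde_second_derivative_bound
    (D : ℕ) (r : ℝ) (hr : 0 < r) (β : ℕ) (hβ : 2 ≤ β)
    (xi : EuclideanSpace ℝ (Fin D)) :
    ∀ (u v x : EuclideanSpace ℝ (Fin D)), ‖u‖ = 1 → ‖v‖ = 1 → ‖x - xi‖ ≤ r →
      |fderiv ℝ (fun y => fderiv ℝ (alphaTilde r β xi) y u) x v|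
        ≤ (4 * (β : ℝ) ^ 2) / r ^ 2
            * ((alphaTilde r β xi x) ^ (((β : ℝ) - 2) / β) * (‖x - xi‖ ^ 2 / r ^ 2)
                + (alphaTilde r β xi x) ^ (((β : ℝ) - 1) / β)) := by
  intro u v x hu hv hx
  have hM := (one_sub_norm_sub_sq_div_nonneg_iff hr x).mpr hx
  have hα : alphaTilde r β xi x = (1 - ‖x - xi‖ ^ 2 / r ^ 2) ^ β := if_pos hx
  have h2 := pow_rpow_natCast_sub_div hM (n := β) (k := 2) hβ (by omega)
  have h1 := pow_rpow_natCast_sub_div hM (n := β) (k := 1) (by omega) (by omega)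
  rw [Nat.cast_ofNat] at h2
  rw [Nat.cast_one] at h1
  rw [hα, h2, h1]
  exact abs_fderiv_fderiv_alphaTilde_le hr hβ hu hv hx
end

section
/- Let M ⊂ ℝ^D be a closed set with reach τ > 0, let z ∈ ℝ^D with δ := d(z, M) < τ, let z* = Π_M(z), and let η ∈ M satisfy ‖z − η‖₂ ≤ r, where δ ≤ r < τ. Decompose η − z* = η̄ + η̂ with η̄ ∈ T_{z*}M and η̂ orthogonal to T_{z*}M. Then ‖η̂‖₂ ≤ (r² − δ²)/(2(τ − δ)). -/
/-!
Federer's inequality: if `q` is a nearest point of `x` in `M` and `d(x, M) < τ`, then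
`2τ⟪x - q, y - q⟫ ≤ d(x, M) ‖y - q‖²` for every `y ∈ M`. It comes from extending the normal
segment: `q` stays a nearest point of `q + t • (x - q)` as long as `t d(x, M) < τ`. For `t ≤ 2`,
maximize `d(·, M)` on the ball of radius `(t - 1) d(x, M)` about `x`. Below the reach nearest
points depend continuously on the point, so at a maximizer `xs` the direction `xs - q'` away from
`M` must point radially outward; hence `d(xs, M) = t d(x, M)`, and equality in the triangle
inequality puts `xs` on the ray from `q` through `x`. Doubling reaches every `t`.

Applied at `z* + h η̂` with `h → 0⁺`, it holds for the normal vector `η̂` in place of `x - q`: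
as `η̂` is orthogonal to the tangent cone, the nearest points of `z* + h η̂` are `z* + o(h)`.
So `2τ‖η̂‖ ≤ ‖η - z*‖²`, while at `z` it reads `2τ⟪z - z*, η - z*⟫ ≤ δ‖η - z*‖²`; substituting
both into `r² ≥ ‖z - η‖² = δ² - 2⟪z - z*, η - z*⟫ + ‖η - z*‖²` gives the bound.
-/

open Metric Filter Set Topology
open scoped RealInnerProductSpace

def IsNearestPoint {X : Type*} [PseudoMetricSpace X] (M : Set X) (x q : X) : Prop :=
  q ∈ M ∧ dist x q = infDist x M

section Metric

variable {X : Type*} [PseudoMetricSpace X] [ProperSpace X] {M : Set X}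

lemma IsClosed.exists_isNearestPoint (hM : IsClosed M) (hne : M.Nonempty) (x : X) :
    ∃ q, IsNearestPoint M x q :=
  let ⟨q, hq, hdist⟩ := hM.exists_infDist_eq_dist hne x
  ⟨q, hq, hdist.symm⟩

lemma tendsto_of_isNearestPoint_of_unique (hM : IsClosed M) {x q : X}
    (huniq : ∀ q', IsNearestPoint M x q' → q' = q) {α : Type*} {l : Filter α} {x' q' : α → X}
    (hx' : Tendsto x' l (𝓝 x)) (hq' : ∀ a, IsNearestPoint M (x' a) (q' a)) :
    Tendsto q' l (𝓝 q) := by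
  refine (isCompact_closedBall x (infDist x M + 1)).tendsto_nhds_of_unique_mapClusterPt ?_ ?_
  · filter_upwards [hx'.eventually (ball_mem_nhds x one_half_pos)] with a ha
    rw [mem_closedBall]
    calc dist (q' a) x ≤ dist (x' a) (q' a) + dist (x' a) x := dist_triangle_left _ _ _
      _ ≤ infDist x M + 2 * dist (x' a) x := by
        rw [(hq' a).2]; linarith [infDist_le_infDist_add_dist (x := x' a) (y := x) (s := M)]
      _ ≤ infDist x M + 1 := by linarith
  · intro y _ hy
    have : NeBot (comap q' (𝓝 y) ⊓ l) := neBot_inf_comap_iff_map'.mpr hy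
    have hq'y : Tendsto q' (comap q' (𝓝 y) ⊓ l) (𝓝 y) := tendsto_comap.mono_left inf_le_left
    have hx'x := hx'.mono_left (inf_le_right (a := comap q' (𝓝 y)))
    refine huniq y ⟨hM.mem_of_tendsto hq'y (.of_forall fun a => (hq' a).1), ?_⟩
    refine tendsto_nhds_unique (hx'x.dist hq'y) ?_
    simp only [(hq' _).2]
    exact ((continuous_infDist_pt M).tendsto x).comp hx'x

end Metric

section InnerProduct

variable {E : Type*} [NormedAddCommGroup E] [InnerProductSpace ℝ E] {M : Set E}

lemma IsNearestPoint.dist_add_smul_sub {x q : E} (hq : IsNearestPoint M x q) {t : ℝ}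
    (ht : 0 ≤ t) : dist (q + t • (x - q)) q = t * infDist x M := by
  rw [dist_eq_norm, add_sub_cancel_left, norm_smul, ← dist_eq_norm, hq.2, Real.norm_of_nonneg ht]

lemma eventually_infDist_lt_infDist_add_smul [ProperSpace E] (hM : IsClosed M) {x q w : E}
    (hq : IsNearestPoint M x q) (huniq : ∀ q', IsNearestPoint M x q' → q' = q)
    (hw : 0 < ⟪x - q, w⟫) : ∀ᶠ h in 𝓝[>] (0 : ℝ), infDist x M < infDist (x + h • w) M := by
  choose q' hq' using hM.exists_isNearestPoint ⟨q, hq.1⟩ (X := E)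
  have hx : Tendsto (fun h : ℝ => x + h • w) (𝓝[>] 0) (𝓝 x) :=
    (Continuous.tendsto' (by fun_prop) 0 x (by simp)).mono_left nhdsWithin_le_nhds
  have hinner : Tendsto (fun h : ℝ => ⟪x + h • w - q' (x + h • w), w⟫) (𝓝[>] 0)
      (𝓝 ⟪x - q, w⟫) :=
    (hx.sub (tendsto_of_isNearestPoint_of_unique hM huniq hx fun _ => hq' _)).inner
      tendsto_const_nhds
  have hsmall : Tendsto (fun h : ℝ => h * ‖w‖ ^ 2) (𝓝[>] 0) (𝓝 0) :=
    (Continuous.tendsto' (by fun_prop) 0 0 (by simp)).mono_left nhdsWithin_le_nhds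
  filter_upwards [hinner.eventually (lt_mem_nhds (half_lt_self hw)),
    hsmall.eventually (gt_mem_nhds (half_pos hw)), self_mem_nhdsWithin] with h hgrad hquad hpos
  have hpos : 0 < h := hpos
  set x' := x + h • w
  -- expand `infDist x M ≤ dist x (q' x')` around `x'`
  have hsq : infDist x M ^ 2 ≤ infDist x' M ^ 2 - 2 * h * ⟪x' - q' x', w⟫ + h ^ 2 * ‖w‖ ^ 2 := by
    have hle : infDist x M ≤ ‖(x' - q' x') - h • w‖ := by
      rw [show (x' - q' x') - h • w = x - q' x' by simp only [x']; abel, ← dist_eq_norm]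
      exact infDist_le_dist_of_mem (hq' x').1
    have := pow_le_pow_left₀ infDist_nonneg hle 2
    rw [norm_sub_sq_real, ← dist_eq_norm, (hq' x').2, real_inner_smul_right, norm_smul,
      Real.norm_of_nonneg hpos.le] at this
    linarith
  refine lt_of_pow_lt_pow_left₀ 2 infDist_nonneg ?_
  nlinarith

lemma mul_infDist_le_inner_of_isMaxOn [ProperSpace E] (hM : IsClosed M) {x₀ xs q : E} {H : ℝ}
    (hxs : xs ∈ closedBall x₀ H) (hmax : IsMaxOn (infDist · M) (closedBall x₀ H) xs)
    (hq : IsNearestPoint M xs q) (huniq : ∀ q', IsNearestPoint M xs q' → q' = q) :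
    H * infDist xs M ≤ ⟪xs - q, xs - x₀⟫ := by
  set d := infDist xs M
  have hnorm : ‖xs - q‖ = d := by rw [← dist_eq_norm, hq.2]
  have hH : ‖xs - x₀‖ ≤ H := by rwa [← dist_eq_norm, ← mem_closedBall]
  by_contra! hlt
  have hd : 0 < d := by
    refine infDist_nonneg.lt_of_ne fun hd => ?_
    have hd0 : d = 0 := hd.symm
    rw [norm_eq_zero.mp (hnorm.trans hd0), inner_zero_left, hd0, mul_zero] at hlt
    exact hlt.false
  -- moving from `xs` along `w` stays in the ball but increases the distance to `M`
  set w := H • (xs - q) - d • (xs - x₀)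
  have hw : 0 < ⟪xs - q, w⟫ := by
    rw [inner_sub_right, real_inner_smul_right, real_inner_smul_right, real_inner_self_eq_norm_sq,
      hnorm]
    nlinarith
  obtain ⟨h, hgt, hpos, hsmall⟩ := ((eventually_infDist_lt_infDist_add_smul hM hq huniq hw).and
    (Ioo_mem_nhdsGT (inv_pos.mpr hd))).exists
  have hmem : xs + h • w ∈ closedBall x₀ H := by
    have hhd : 0 ≤ 1 - h * d := by
      have := mul_lt_mul_of_pos_right hsmall hd
      rw [inv_mul_cancel₀ hd.ne'] at this
      linarith
    rw [mem_closedBall, dist_eq_norm,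
      show xs + h • w - x₀ = (1 - h * d) • (xs - x₀) + (h * H) • (xs - q) by
        simp only [w, smul_sub, smul_smul]; module]
    calc ‖(1 - h * d) • (xs - x₀) + (h * H) • (xs - q)‖
        ≤ (1 - h * d) * ‖xs - x₀‖ + h * H * ‖xs - q‖ := by
          refine (norm_add_le _ _).trans_eq ?_
          rw [norm_smul, norm_smul, Real.norm_of_nonneg hhd,
            Real.norm_of_nonneg (mul_nonneg hpos.le (le_trans (norm_nonneg _) hH))]
      _ ≤ (1 - h * d) * H + h * H * d := by
          rw [hnorm]; gcongr
      _ = H := by ring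
  exact (hmax hmem).not_gt hgt

lemma eq_smul_of_norm_le_of_le_norm_add {a b : E} {s : ℝ} (hs : 0 ≤ s) (ha : ‖a‖ ≤ s * ‖b‖)
    (hab : (1 + s) * ‖b‖ ≤ ‖a + b‖) : a = s • b := by
  have hsq := pow_le_pow_left₀ (mul_nonneg (by linarith) (norm_nonneg b)) hab 2
  rw [norm_add_sq_real] at hsq
  have ha2 := pow_le_pow_left₀ (norm_nonneg a) ha 2
  rw [← sub_eq_zero, ← norm_eq_zero, ← sq_eq_zero_iff]
  refine le_antisymm ?_ (sq_nonneg _)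
  rw [norm_sub_sq_real, real_inner_smul_right, norm_smul, Real.norm_of_nonneg hs]
  nlinarith

lemma IsNearestPoint.add_smul_sub_of_le_two [ProperSpace E] (hM : IsClosed M) {τ : ℝ}
    (hreach : ∀ w, infDist w M < τ → ∃! y, IsNearestPoint M w y) {x q : E}
    (hq : IsNearestPoint M x q) {t : ℝ} (ht1 : 1 ≤ t) (ht2 : t ≤ 2) (htτ : t * infDist x M < τ) :
    IsNearestPoint M (q + t • (x - q)) q := by
  set d := infDist x M
  set H := (t - 1) * d
  have hd : 0 ≤ d := infDist_nonneg
  have hH : 0 ≤ H := mul_nonneg (by linarith) hd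
  have hnorm : ‖x - q‖ = d := by rw [← dist_eq_norm, hq.2]
  obtain ⟨xs, hxs, hmax⟩ := (isCompact_closedBall x H).exists_isMaxOn
    (nonempty_closedBall.mpr hH) (continuous_infDist_pt M).continuousOn
  have hxs_dist : ‖xs - x‖ ≤ H := by rwa [← dist_eq_norm, ← mem_closedBall]
  have hxs_le : infDist xs M ≤ d + H := by
    linarith [infDist_le_infDist_add_dist (x := xs) (y := x) (s := M), dist_eq_norm xs x]
  have hxs_ge : d ≤ infDist xs M := hmax (mem_closedBall_self hH)
  obtain ⟨q', hq', huniq⟩ := hreach xs (by linarith)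
  have hfirst := mul_infDist_le_inner_of_isMaxOn hM hxs hmax hq' huniq
  -- by the first-order condition, `x` is within `d(xs, M) - H` of the nearest point `q'` of `xs`
  have hxs_eq : infDist xs M = d + H := by
    have hsq : d ^ 2 ≤ (infDist xs M - H) ^ 2 :=
      calc d ^ 2 ≤ ‖(xs - q') - (xs - x)‖ ^ 2 := by
            refine pow_le_pow_left₀ hd ?_ 2
            rw [sub_sub_sub_cancel_left, ← dist_eq_norm]
            exact infDist_le_dist_of_mem hq'.1
        _ = infDist xs M ^ 2 - 2 * ⟪xs - q', xs - x⟫ + ‖xs - x‖ ^ 2 := by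
            rw [norm_sub_sq_real, ← dist_eq_norm xs q', hq'.2]
        _ ≤ (infDist xs M - H) ^ 2 := by
            nlinarith [pow_le_pow_left₀ (norm_nonneg _) hxs_dist 2]
    have hHd : H ≤ d := by nlinarith
    have := (pow_le_pow_iff_left₀ hd (by linarith) two_ne_zero).mp hsq
    linarith
  have hxs_point : q + t • (x - q) = xs := by
    have hab : (1 + (t - 1)) * ‖x - q‖ ≤ ‖(xs - x) + (x - q)‖ := by
      rw [sub_add_sub_cancel, hnorm, ← dist_eq_norm]
      linarith [infDist_le_dist_of_mem (x := xs) hq.1]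
    have := eq_smul_of_norm_le_of_le_norm_add (by linarith) (by rwa [hnorm]) hab
    rw [← sub_add_cancel xs x, this]
    module
  refine ⟨hq.1, ?_⟩
  rw [hq.dist_add_smul_sub (by linarith), hxs_point, hxs_eq]
  ring

-- Each step at most doubles the distance to `M`, so finitely many steps reach any `t < τ / d`.
lemma IsNearestPoint.add_smul_sub [ProperSpace E] (hM : IsClosed M) {τ : ℝ}
    (hreach : ∀ w, infDist w M < τ → ∃! y, IsNearestPoint M w y) {x q : E}
    (hq : IsNearestPoint M x q) {t : ℝ} (ht : 1 ≤ t) (htτ : t * infDist x M < τ) :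
    IsNearestPoint M (q + t • (x - q)) q := by
  obtain ⟨k, hk⟩ := pow_unbounded_of_one_lt t one_lt_two
  induction k generalizing x t with
  | zero => rw [pow_zero] at hk; linarith
  | succ k ih =>
    rcases le_or_gt t 2 with ht2 | ht2
    · exact hq.add_smul_sub_of_le_two hM hreach ht ht2 htτ
    have hd : 0 ≤ infDist x M := infDist_nonneg
    have hq₂ := hq.add_smul_sub_of_le_two hM hreach one_le_two le_rfl (by nlinarith)
    have hd₂ : infDist (q + (2 : ℝ) • (x - q)) M = 2 * infDist x M := by
      rw [← hq₂.2, hq.dist_add_smul_sub zero_le_two]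
    have := ih hq₂ (t := t / 2) (by linarith) (by rw [hd₂]; linarith)
      (by rw [pow_succ] at hk; linarith)
    rwa [add_sub_cancel_left, smul_smul, div_mul_cancel₀ t two_ne_zero] at this

theorem IsNearestPoint.two_mul_inner_le [ProperSpace E] (hM : IsClosed M) {τ : ℝ}
    (hreach : ∀ w, infDist w M < τ → ∃! y, IsNearestPoint M w y) {x q y : E}
    (hq : IsNearestPoint M x q) (hx : infDist x M < τ) (hy : y ∈ M) :
    2 * τ * ⟪x - q, y - q⟫ ≤ infDist x M * ‖y - q‖ ^ 2 := by
  set d := infDist x M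
  have hnorm : ‖x - q‖ = d := by rw [← dist_eq_norm, hq.2]
  rcases (infDist_nonneg : 0 ≤ d).eq_or_lt with hd | hd
  · rw [norm_eq_zero.mp (hnorm.trans hd.symm), inner_zero_left, mul_zero]
    exact mul_nonneg infDist_nonneg (sq_nonneg _)
  -- `q` is a nearest point of `q + (S / d) • (x - q)`, so `y` is at distance at least `S` from it
  have hS : ∀ S ∈ Ico d τ, 2 * S * ⟪x - q, y - q⟫ ≤ d * ‖y - q‖ ^ 2 := by
    rintro S ⟨hdS, hSτ⟩
    set t := S / d
    have htd : t * d = S := div_mul_cancel₀ S hd.ne'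
    have ht : 1 ≤ t := (one_le_div hd).mpr hdS
    have hext := hq.add_smul_sub hM hreach ht (by rwa [htd])
    have hle : t * d ≤ ‖t • (x - q) - (y - q)‖ := by
      rw [← hq.dist_add_smul_sub (by linarith), hext.2,
        show t • (x - q) - (y - q) = q + t • (x - q) - y by abel, ← dist_eq_norm]
      exact infDist_le_dist_of_mem hy
    have hsq := pow_le_pow_left₀ (by positivity) hle 2
    rw [norm_sub_sq_real, norm_smul, real_inner_smul_left, hnorm,
      Real.norm_of_nonneg (by linarith)] at hsq
    rw [← htd]
    nlinarith
  have hclosed : IsClosed {S : ℝ | 2 * S * ⟪x - q, y - q⟫ ≤ d * ‖y - q‖ ^ 2} :=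
    isClosed_le (by fun_prop) continuous_const
  refine hclosed.closure_subset_iff.mpr hS ?_
  rw [closure_Ico hx.ne]
  exact right_mem_Icc.mpr hx.le

lemma tendsto_zero_of_inner_tangentConeAt_nonpos [ProperSpace E] {p v : E}
    (hv : ∀ u ∈ tangentConeAt ℝ M p, ⟪v, u⟫ ≤ 0) {α : Type*} {l : Filter α} {c : α → ℝ}
    {w : α → E} (hc : Tendsto c l (𝓝[≠] 0)) (hmem : ∀ᶠ a in l, p + c a • w a ∈ M)
    (hw : ∀ᶠ a in l, ‖v - w a‖ ≤ ‖v‖) : Tendsto w l (𝓝 0) := by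
  refine (isCompact_closedBall (0 : E) (2 * ‖v‖)).tendsto_nhds_of_unique_mapClusterPt ?_ ?_
  · filter_upwards [hw] with a ha
    rw [mem_closedBall, dist_zero_right]
    linarith [norm_le_insert' (w a) v, norm_sub_rev v (w a)]
  · intro ξ _ hξ
    have : NeBot (comap w (𝓝 ξ) ⊓ l) := neBot_inf_comap_iff_map'.mpr hξ
    have hwξ : Tendsto w (comap w (𝓝 ξ) ⊓ l) (𝓝 ξ) := tendsto_comap.mono_left inf_le_left
    have hc' := hc.mono_left (inf_le_right (a := comap w (𝓝 ξ)))
    have hcone : ξ ∈ tangentConeAt ℝ M p := by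
      refine mem_tangentConeAt_of_seq (comap w (𝓝 ξ) ⊓ l) (fun a => (c a)⁻¹) (fun a => c a • w a)
        ?_ (hmem.filter_mono inf_le_right) ?_
      · simpa using (tendsto_nhds_of_tendsto_nhdsWithin hc').smul hwξ
      · refine hwξ.congr' ?_
        filter_upwards [hc'.eventually self_mem_nhdsWithin] with a ha
        rw [smul_smul, inv_mul_cancel₀ ha, one_smul]
    have hξv : ‖v - ξ‖ ≤ ‖v‖ :=
      (isClosed_le (f := fun u : E => ‖v - u‖) (by fun_prop) continuous_const).mem_of_mapClusterPt
        hξ hw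
    have hsq := pow_le_pow_left₀ (norm_nonneg _) hξv 2
    rw [norm_sub_sq_real] at hsq
    rw [← norm_eq_zero, ← sq_eq_zero_iff]
    nlinarith [hv ξ hcone, sq_nonneg ‖ξ‖]

theorem two_mul_inner_le_of_inner_tangentConeAt_nonpos [ProperSpace E] (hM : IsClosed M)
    {τ : ℝ} (hτ : 0 < τ) (hreach : ∀ w, infDist w M < τ → ∃! y, IsNearestPoint M w y)
    {p v y : E} (hp : p ∈ M) (hv : ∀ u ∈ tangentConeAt ℝ M p, ⟪v, u⟫ ≤ 0) (hy : y ∈ M) :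
    2 * τ * ⟪v, y - p⟫ ≤ ‖v‖ * ‖y - p‖ ^ 2 := by
  -- apply Federer's inequality at `p + h • v`, whose nearest point is `p + h • w h`, and let
  -- `h → 0⁺`; the normality of `v` forces `w h → 0`
  choose q hq using hM.exists_isNearestPoint ⟨p, hp⟩ (X := E)
  set w : ℝ → E := fun h => h⁻¹ • (q (p + h • v) - p)
  have hqw : ∀ h ≠ 0, q (p + h • v) = p + h • w h := fun h hh => by
    simp only [w, smul_smul, mul_inv_cancel₀ hh, one_smul, add_sub_cancel]
  have hvw : ∀ h ≠ 0, p + h • v - q (p + h • v) = h • (v - w h) := fun h hh => by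
    rw [hqw h hh, smul_sub]; abel
  have hdist : ∀ h > 0, infDist (p + h • v) M ≤ h * ‖v‖ := fun h hh => by
    simpa [dist_eq_norm, norm_smul, abs_of_pos hh] using
      infDist_le_dist_of_mem (x := p + h • v) hp
  have hw : ∀ h > 0, ‖v - w h‖ ≤ ‖v‖ := fun h hh => by
    have := hdist h hh
    rw [← (hq _).2, dist_eq_norm, hvw h hh.ne', norm_smul, Real.norm_of_nonneg hh.le] at this
    exact le_of_mul_le_mul_left this hh
  have hw0 : Tendsto w (𝓝[>] 0) (𝓝 0) :=
    tendsto_zero_of_inner_tangentConeAt_nonpos hv (c := id)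
      (tendsto_nhdsWithin_mono_right (fun h hh => ne_of_gt hh) tendsto_id)
      (eventually_nhdsWithin_of_forall fun h hh => hqw h (ne_of_gt hh) ▸ (hq _).1)
      (eventually_nhdsWithin_of_forall hw)
  have hq0 : Tendsto (fun h : ℝ => q (p + h • v)) (𝓝[>] 0) (𝓝 p) := by
    have : Tendsto (fun h : ℝ => p + h • w h) (𝓝[>] 0) (𝓝 (p + (0 : ℝ) • (0 : E))) :=
      tendsto_const_nhds.add ((tendsto_nhds_of_tendsto_nhdsWithin tendsto_id).smul hw0)
    rw [smul_zero, add_zero] at this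
    exact this.congr' (eventually_nhdsWithin_of_forall fun h (hh : 0 < h) => (hqw h hh.ne').symm)
  have hsmall : ∀ᶠ h in 𝓝[>] (0 : ℝ), h * ‖v‖ < τ := by
    have : Tendsto (fun h : ℝ => h * ‖v‖) (𝓝[>] 0) (𝓝 0) :=
      (Continuous.tendsto' (by fun_prop) 0 0 (by simp)).mono_left nhdsWithin_le_nhds
    exact this.eventually (gt_mem_nhds hτ)
  have hineq : ∀ᶠ h in 𝓝[>] (0 : ℝ),
      2 * τ * ⟪v - w h, y - q (p + h • v)⟫ ≤ ‖v‖ * ‖y - q (p + h • v)‖ ^ 2 := by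
    filter_upwards [hsmall, self_mem_nhdsWithin] with h hhτ hh
    have hh : (0 : ℝ) < h := hh
    have := (hq (p + h • v)).two_mul_inner_le hM hreach ((hdist h hh).trans_lt hhτ) hy
    rw [hvw h hh.ne', real_inner_smul_left] at this
    have := this.trans (mul_le_mul_of_nonneg_right (hdist h hh) (sq_nonneg _))
    nlinarith
  refine le_of_tendsto_of_tendsto ?_ ?_ hineq
  · simpa using
      ((tendsto_const_nhds.sub hw0).inner (tendsto_const_nhds.sub hq0)).const_mul (2 * τ)
  · exact ((tendsto_const_nhds.sub hq0).norm.pow 2).const_mul ‖v‖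

end InnerProduct

theorem normal_component_bound_general
    (D : ℕ) (M : Set (EuclideanSpace ℝ (Fin D))) (hM : IsClosed M)
    (τ : ℝ)
    (hreach : ∀ w : EuclideanSpace ℝ (Fin D), infDist w M < τ →
      ∃! y, y ∈ M ∧ dist w y = infDist w M)
    (z zstar : EuclideanSpace ℝ (Fin D))
    (hzstar : zstar ∈ M ∧ dist z zstar = infDist z M)
    (r : ℝ) (hδr : infDist z M ≤ r) (hrτ : r < τ)
    (T : Submodule ℝ (EuclideanSpace ℝ (Fin D)))
    (hT : (T : Set (EuclideanSpace ℝ (Fin D))) = tangentConeAt ℝ M zstar)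
    (η : EuclideanSpace ℝ (Fin D)) (hη : η ∈ M) (hηz : ‖z - η‖ ≤ r)
    (ηbar ηhat : EuclideanSpace ℝ (Fin D))
    (hdecomp : η - zstar = ηbar + ηhat)
    (hbar : ηbar ∈ T)
    (hhat : ∀ v ∈ T, inner (𝕜 := ℝ) ηhat v = 0) :
    ‖ηhat‖ ≤ (r ^ 2 - infDist z M ^ 2) / (2 * (τ - infDist z M)) := by
  set δ := infDist z M
  have hδτ : δ < τ := hδr.trans_lt hrτ
  have hτ : 0 < τ := infDist_nonneg.trans_lt hδτ
  have hnormal := two_mul_inner_le_of_inner_tangentConeAt_nonpos hM hτ hreach hzstar.1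
    (fun u hu => (hhat u (by rwa [← SetLike.mem_coe, hT])).le) hη
  have hz := IsNearestPoint.two_mul_inner_le hM hreach hzstar hδτ hη
  have hinner : ⟪ηhat, η - zstar⟫ = ‖ηhat‖ ^ 2 := by
    rw [hdecomp, inner_add_right, hhat ηbar hbar, real_inner_self_eq_norm_sq, zero_add]
  have hexpand : ‖z - η‖ ^ 2 = δ ^ 2 - 2 * ⟪z - zstar, η - zstar⟫ + ‖η - zstar‖ ^ 2 := by
    rw [← sub_sub_sub_cancel_right z η zstar, norm_sub_sq_real, ← dist_eq_norm, hzstar.2]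
  have hN : ‖η - zstar‖ ^ 2 * (τ - δ) ≤ τ * (r ^ 2 - δ ^ 2) := by
    nlinarith [pow_le_pow_left₀ (norm_nonneg _) hηz 2]
  have hηhat : 2 * τ * ‖ηhat‖ ≤ ‖η - zstar‖ ^ 2 := by
    rcases (norm_nonneg ηhat).eq_or_lt with h0 | hpos
    · rw [← h0, mul_zero]
      exact sq_nonneg _
    · rw [hinner] at hnormal
      nlinarith
  rw [le_div_iff₀ (by linarith)]
  nlinarith

/-- Let M ⊂ ℝ^D be closed with reach τ > 0, z with δ = d(z,M) < τ and nearest point z*,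
and η ∈ M with ‖z − η‖ ≤ r where δ ≤ r < τ. Writing η − z* = η̄ + η̂ with η̄ ∈ T_{z*}M
and η̂ ⊥ T_{z*}M, we have ‖η̂‖ ≤ (r² − δ²)/(2(τ − δ)). -/
theorem normal_component_bound
    (D : ℕ) (M : Set (EuclideanSpace ℝ (Fin D))) (hM : IsClosed M)
    (τ : ℝ) (hτ : 0 < τ)
    (hreach : ∀ w : EuclideanSpace ℝ (Fin D), infDist w M < τ →
      ∃! y, y ∈ M ∧ dist w y = infDist w M)
    (z zstar : EuclideanSpace ℝ (Fin D))
    (hzstar : zstar ∈ M ∧ dist z zstar = infDist z M)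
    (r : ℝ) (hδr : infDist z M ≤ r) (hrτ : r < τ)
    (T : Submodule ℝ (EuclideanSpace ℝ (Fin D)))
    (hT : (T : Set (EuclideanSpace ℝ (Fin D))) = tangentConeAt ℝ M zstar)
    (η : EuclideanSpace ℝ (Fin D)) (hη : η ∈ M) (hηz : ‖z - η‖ ≤ r)
    (ηbar ηhat : EuclideanSpace ℝ (Fin D))
    (hdecomp : η - zstar = ηbar + ηhat)
    (hbar : ηbar ∈ T)
    (hhat : ∀ v ∈ T, inner (𝕜 := ℝ) ηhat v = 0) :
    ‖ηhat‖ ≤ (r ^ 2 - infDist z M ^ 2) / (2 * (τ - infDist z M)) :=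
  normal_component_bound_general D M hM τ hreach z zstar hzstar r hδr hrτ T hT η hη hηz ηbar ηhat
    hdecomp hbar hhat
end
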